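/- arXiv:1304.1015 — 4 statements merged into one kernel-verified Lean document; each statement's English description precedes it below -/
import Mathlib

section
/- Let 𝔊 be a homothecy invariant collection of open rectangles in ℝⁿ, let μ be a nonzero locally finite nonnegative Borel measure doubling with respect to 𝔊 with constant Δ_μ, and fix β ∈ (0,1). Suppose E ⊆ ℝⁿ is a Borel set, R ∈ 𝔊, μ(R) > 0, and μ(E ∩ R)/μ(R) = α for some α ∈ (0,β). Then there exists a nonnegative integer N with β^{−(N+1)} ≥ Δ_μ such that μ(R ∩ H_β^{N+2}(E)) ≥ (1/β)·μ(E ∩ R). -/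
open MeasureTheory Set Filter
open scoped ENNReal Topology Pointwise

noncomputable section

/-- The maximal operator `M_{𝔅,μ}` associated to a measure `μ` and a collection `𝔅`
of subsets of `ℝⁿ`, applied to `f` at the point `x` (valued in `ℝ≥0∞`; it equals `0`
outside the union of `𝔅`). -/
noncomputable def maxOp {n : ℕ} (μ : Measure (EuclideanSpace ℝ (Fin n)))
    (𝔅 : Set (Set (EuclideanSpace ℝ (Fin n))))
    (f : EuclideanSpace ℝ (Fin n) → ℝ) (x : EuclideanSpace ℝ (Fin n)) : ℝ≥0∞ :=
  ⨆ (B : Set (EuclideanSpace ℝ (Fin n))) (_ : B ∈ 𝔅) (_ : x ∈ B) (_ : 0 < μ B),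
    (∫⁻ y in B, ENNReal.ofReal |f y| ∂μ) / μ B

/-- A collection of sets is homothecy invariant if it is closed under translations and
positive dilations. -/
def HomothecyInvariant {n : ℕ} (𝔅 : Set (Set (EuclideanSpace ℝ (Fin n)))) : Prop :=
  ∀ B ∈ 𝔅, (∀ y : EuclideanSpace ℝ (Fin n), y +ᵥ B ∈ 𝔅) ∧ (∀ s : ℝ, 0 < s → s • B ∈ 𝔅)

/-- `μ` is doubling with respect to the collection `𝔅`, with constant `Δ`: whenever
`B ∈ 𝔅` and a translate of the dilate `2·B` contains `B`, its measure is at most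
`Δ·μ(B)`. -/
def DoublingWrt {n : ℕ} (μ : Measure (EuclideanSpace ℝ (Fin n)))
    (𝔅 : Set (Set (EuclideanSpace ℝ (Fin n)))) (Δ : ℝ) : Prop :=
  ∀ B ∈ 𝔅, ∀ σ : EuclideanSpace ℝ (Fin n),
    B ⊆ σ +ᵥ (2 : ℝ) • B → μ (σ +ᵥ (2 : ℝ) • B) ≤ ENNReal.ofReal Δ * μ B

/-- A member of a basis of convex sets: nonempty, bounded, open and convex. -/
def IsConvexBasisSet {n : ℕ} (B : Set (EuclideanSpace ℝ (Fin n))) : Prop :=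
  B.Nonempty ∧ Bornology.IsBounded B ∧ IsOpen B ∧ Convex ℝ B

/-- An open axis-parallel rectangle in `ℝⁿ`. -/
def IsAxisRect {n : ℕ} (R : Set (EuclideanSpace ℝ (Fin n))) : Prop :=
  ∃ a b : Fin n → ℝ, (∀ i, a i < b i) ∧ R = {x | ∀ i, x i ∈ Set.Ioo (a i) (b i)}

/-- An open rectangle (possibly rotated rectangular parallelepiped) in `ℝⁿ`:
the image of an open axis-parallel rectangle under a rigid motion. -/
def IsRect {n : ℕ} (R : Set (EuclideanSpace ℝ (Fin n))) : Prop :=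
  ∃ (f : EuclideanSpace ℝ (Fin n) ≃ᵢ EuclideanSpace ℝ (Fin n))
    (S : Set (EuclideanSpace ℝ (Fin n))), IsAxisRect S ∧ R = f '' S

/-- An open axis-parallel cube in `ℝⁿ`. -/
def IsAxisCube {n : ℕ} (C : Set (EuclideanSpace ℝ (Fin n))) : Prop :=
  ∃ (a : Fin n → ℝ) (s : ℝ), 0 < s ∧ C = {x | ∀ i, x i ∈ Set.Ioo (a i) (a i + s)}

/-- `M_{𝔅,μ}` is bounded on `L^p(ν)`. -/
def BoundedOnLp {n : ℕ} (μ ν : Measure (EuclideanSpace ℝ (Fin n)))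
    (𝔅 : Set (Set (EuclideanSpace ℝ (Fin n)))) (p : ℝ) : Prop :=
  ∃ C : ℝ≥0∞, C ≠ ⊤ ∧ ∀ f : EuclideanSpace ℝ (Fin n) → ℝ, Measurable f →
    ∫⁻ x, maxOp μ 𝔅 f x ^ p ∂ν ≤ C * ∫⁻ x, ENNReal.ofReal |f x| ^ p ∂ν

/-- The Tauberian condition for `M_{𝔅,μ}` at level `γ`, with constant `c`, with respect
to the measure `ν`. -/
def TauberianCond {n : ℕ} (μ ν : Measure (EuclideanSpace ℝ (Fin n)))
    (𝔅 : Set (Set (EuclideanSpace ℝ (Fin n)))) (γ c : ℝ) : Prop :=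
  ∀ E : Set (EuclideanSpace ℝ (Fin n)), MeasurableSet E →
    ν {x | ENNReal.ofReal γ < maxOp μ 𝔅 (E.indicator 1) x} ≤ ENNReal.ofReal c * ν E

/-- The standard open dyadic box of scale `2^k` and position `m` in `ℝⁿ`. -/
def stdBox (n : ℕ) (k : ℤ) (m : Fin n → ℤ) : Set (Fin n → ℝ) :=
  {x | ∀ i, (m i : ℝ) * 2 ^ k < x i ∧ x i < ((m i : ℝ) + 1) * 2 ^ k}

/-- A parametrization of a rectangular grid: a rigid motion composed with a positive
diagonal scaling. The image of the standard unit box under such a map is a rectangle. -/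
def IsRectParam {n : ℕ} (T : (Fin n → ℝ) → EuclideanSpace ℝ (Fin n)) : Prop :=
  ∃ (f : EuclideanSpace ℝ (Fin n) ≃ᵢ EuclideanSpace ℝ (Fin n)) (l : Fin n → ℝ),
    (∀ i, 0 < l i) ∧
    ∀ x, T x = f ((WithLp.equiv 2 (Fin n → ℝ)).symm (fun i => l i * x i))

/-- The dyadic mesh generated by a rectangle parametrized by `T`. -/
def dyadicMesh {n : ℕ} (T : (Fin n → ℝ) → EuclideanSpace ℝ (Fin n)) :
    Set (Set (EuclideanSpace ℝ (Fin n))) :=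
  {S | ∃ (k : ℤ) (m : Fin n → ℤ), S = T '' stdBox n k m}

/-- `S` is a dyadic descendant of the rectangle `R`, `s` generations inside `R`. -/
def DyadicDescendant {n : ℕ} (R S : Set (EuclideanSpace ℝ (Fin n))) (s : ℕ) : Prop :=
  ∃ T : (Fin n → ℝ) → EuclideanSpace ℝ (Fin n), IsRectParam T ∧
    T '' stdBox n 0 0 = R ∧
    ∃ m : Fin n → ℤ, (∀ i, 0 ≤ m i ∧ m i < 2 ^ s) ∧ S = T '' stdBox n (-(s : ℤ)) m

/-- The family of all homothetic copies (translates and positive dilates) of `R₀`. -/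
def homCopies {n : ℕ} (R₀ : Set (EuclideanSpace ℝ (Fin n))) :
    Set (Set (EuclideanSpace ℝ (Fin n))) :=
  {S | ∃ (y : EuclideanSpace ℝ (Fin n)) (s : ℝ), 0 < s ∧ S = y +ᵥ s • R₀}

/-- Iterated halo sets `H_β^k(E)`: `H_β^0(E) = E` and
`H_β^{k+1}(E) = {x : M_{𝔊,μ}(1_{H_β^k(E)})(x) ≥ β}`. -/
def Hiter {n : ℕ} (μ : Measure (EuclideanSpace ℝ (Fin n)))
    (𝔊 : Set (Set (EuclideanSpace ℝ (Fin n)))) (β : ℝ)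
    (E : Set (EuclideanSpace ℝ (Fin n))) : ℕ → Set (EuclideanSpace ℝ (Fin n))
  | 0 => E
  | k + 1 => {x | ENNReal.ofReal β ≤ maxOp μ 𝔊 ((Hiter μ 𝔊 β E k).indicator 1) x}

/-- The Muckenhoupt `A_{p,𝔅}` condition for a weight `w` (with respect to Lebesgue
measure); here `1 - p/(p-1) = 1 - p'`. -/
def MuckenhouptAp {n : ℕ} (𝔅 : Set (Set (EuclideanSpace ℝ (Fin n))))
    (w : EuclideanSpace ℝ (Fin n) → ℝ) (p : ℝ) : Prop :=
  ∃ C : ℝ≥0∞, C ≠ ⊤ ∧ ∀ B ∈ 𝔅,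
    ((∫⁻ x in B, ENNReal.ofReal (w x) ∂volume) / volume B) *
      (((∫⁻ x in B, ENNReal.ofReal (w x) ^ (1 - p / (p - 1)) ∂volume) / volume B) ^ (p - 1))
      ≤ C

/-- `𝔅` is a Muckenhoupt basis: for every `1 < p < ∞` and every weight `w ∈ A_{p,𝔅}`,
the maximal operator `M_𝔅` is bounded on `L^p(w)`. -/
def MuckenhouptBasis {n : ℕ} (𝔅 : Set (Set (EuclideanSpace ℝ (Fin n)))) : Prop :=
  ∀ p : ℝ, 1 < p → ∀ w : EuclideanSpace ℝ (Fin n) → ℝ, (∀ x, 0 ≤ w x) →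
    LocallyIntegrable w volume → MuckenhouptAp 𝔅 w p →
    BoundedOnLp volume (volume.withDensity fun x => ENNReal.ofReal (w x)) 𝔅 p

end

/-!
Pull `μ` back along an affine bijection `T : ℝⁿ → ℝⁿ` with `T '' ball 0 1 = R`, where `ℝⁿ`
carries the sup norm: the balls of `ℝⁿ` are cubes, so their images are homothetic copies of `R`,
and the pulled-back measure `ν` is doubling on balls. For a doubling measure every hyperplane is
porous, hence null by the Besicovitch density theorem; so spheres are null and `t ↦ ν (ball x t)`
is continuous. At a density point `x` of the pulled-back `E ∩ R` a small ball `ball x r` lies in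
`H¹`. If `ball x t ⊆ Hᵏ` and `β ν (ball x t') ≤ ν (ball x t)` then `ball x t' ⊆ Hᵏ⁺¹`, and by
continuity such `t'` can be chosen with `ν (ball x t') = ν (ball x t) / β`. Finitely many steps
reach `ball x 2 ⊇ ball 0 1`, so `R ⊆ H^{N+2}` for every large `N`; as `μ (E ∩ R) = α μ R` with
`α < β`, this gives the inequality.
-/

section

open Metric

section MetricMeasure

variable {X : Type*} [MetricSpace X] [MeasurableSpace X] {ν : Measure X}

theorem ball_ae_eq_closedBall {x : X} {r : ℝ} (h : ν (sphere x r) = 0) :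
    ball x r =ᵐ[ν] closedBall x r :=
  ae_eq_set.2 ⟨by simp [sdiff_eq_empty.2 ball_subset_closedBall], by rwa [closedBall_sdiff_ball]⟩

theorem tendsto_measure_ball_nhdsLT (x : X) (r : ℝ) :
    Tendsto (fun s => ν (ball x s)) (𝓝[<] r) (𝓝 (ν (ball x r))) := by
  have hmono : Monotone fun s => ν (ball x s) := fun s s' h => measure_mono (ball_subset_ball h)
  convert hmono.tendsto_nhdsLT r using 2
  obtain ⟨u, hu_mono, hu_mem, hu_lim⟩ := exists_seq_strictMono_tendsto' (sub_one_lt r)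
  have hballs : Monotone fun k => ball x (u k) := fun k k' h =>
    ball_subset_ball (hu_mono.monotone h)
  have hunion : ⋃ k, ball x (u k) = ball x r := by
    refine Subset.antisymm (iUnion_subset fun k => ball_subset_ball (hu_mem k).2.le) fun y hy => ?_
    obtain ⟨k, hk⟩ := (hu_lim.eventually (lt_mem_nhds (mem_ball.1 hy))).exists
    exact mem_iUnion.2 ⟨k, hk⟩
  refine le_antisymm ?_
    (csSup_le (nonempty_Iio.image _) (forall_mem_image.2 fun s hs => hmono hs.le))
  rw [← hunion, hballs.measure_iUnion]
  exact iSup_le fun k =>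
    le_csSup (hmono.map_bddAbove bddAbove_Iio) (mem_image_of_mem _ (hu_mem k).2)

theorem continuousAt_measure_ball [OpensMeasurableSpace X] [ProperSpace X]
    [IsFiniteMeasureOnCompacts ν] (x : X) {r : ℝ} (hr : ν (sphere x r) = 0) :
    ContinuousAt (fun s => ν (ball x s)) r := by
  have hright : Tendsto (fun s => ν (ball x s)) (𝓝[>] r) (𝓝 (ν (ball x r))) := by
    rw [measure_congr (ball_ae_eq_closedBall hr), ← biInter_gt_ball]
    exact tendsto_measure_biInter_gt (fun _ _ => measurableSet_ball.nullMeasurableSet)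
      (fun _ _ _ h => ball_subset_ball h) ⟨r + 1, lt_add_one r, measure_ball_lt_top.ne⟩
  exact continuousAt_iff_continuous_left_right.2
    ⟨continuousWithinAt_Iio_iff_Iic.1 (tendsto_measure_ball_nhdsLT x r),
      continuousWithinAt_Ioi_iff_Ici.1 hright⟩

variable [SecondCountableTopology X] [HasBesicovitchCovering X] [BorelSpace X]
  [IsLocallyFiniteMeasure ν]

theorem exists_mem_tendsto_measure_inter_div {s : Set X} (hs : MeasurableSet s) (h : ν s ≠ 0) :
    ∃ x ∈ s, Tendsto (fun r => ν (s ∩ closedBall x r) / ν (closedBall x r)) (𝓝[>] 0) (𝓝 1) := by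
  have : (ae (ν.restrict s)).NeBot := ae_restrict_neBot.2 h
  obtain ⟨x, hx, hxs⟩ :=
    ((Besicovitch.ae_tendsto_measure_inter_div ν s).and (ae_restrict_mem hs)).exists
  exact ⟨x, hxs, hx⟩

theorem measure_eq_zero_of_porous [ProperSpace X] {s : Set X} (hs : MeasurableSet s) {D : ℝ≥0∞}
    (hD : D ≠ ⊤) (h : ∀ x ∈ s, ∀ᶠ r in 𝓝[>] 0,
      ∃ t ⊆ closedBall x r, Disjoint s t ∧ ν (closedBall x r) ≤ D * ν t) :
    ν s = 0 := by
  by_contra hs0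
  obtain ⟨x, hxs, hx⟩ := exists_mem_tendsto_measure_inter_div hs hs0
  have hbound : ∀ᶠ r in 𝓝[>] 0, ν (s ∩ closedBall x r) / ν (closedBall x r) ≤ 1 - D⁻¹ := by
    filter_upwards [h x hxs] with r ⟨t, hts, hst, hct⟩
    set c := ν (closedBall x r)
    have hc : c ≠ ⊤ := measure_closedBall_lt_top.ne
    have hsum : ν (s ∩ closedBall x r) + ν t ≤ c := by
      rw [← measure_union' (hst.mono_left inter_subset_left) (hs.inter measurableSet_closedBall)]
      exact measure_mono (union_subset inter_subset_right hts)
    rcases eq_or_ne c 0 with hc0 | hc0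
    -- `c = 0` forces the numerator to vanish, and `0 / 0 = 0` in `ℝ≥0∞`
    · simp [nonpos_iff_eq_zero.1 (hc0 ▸ le_trans le_self_add hsum)]
    calc ν (s ∩ closedBall x r) / c ≤ (c - ν t) / c := by
          gcongr
          exact ENNReal.le_sub_of_add_le_right
            (ne_top_of_le_ne_top hc (le_trans le_add_self hsum)) hsum
      _ = 1 - ν t / c := by rw [ENNReal.sub_div (fun _ _ => hc0), ENNReal.div_self hc0 hc]
      _ ≤ 1 - D⁻¹ := by
          gcongr
          rw [ENNReal.le_div_iff_mul_le (Or.inl hc0) (Or.inl hc), mul_comm, ← div_eq_mul_inv]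
          exact ENNReal.div_le_of_le_mul (mul_comm D _ ▸ hct)
  have h1 : (1 : ℝ≥0∞) ≤ 1 - D⁻¹ := le_of_tendsto hx hbound
  exact h1.not_gt (ENNReal.sub_lt_self ENNReal.one_ne_top one_ne_zero (ENNReal.inv_ne_zero.2 hD))

end MetricMeasure

theorem chain_of_continuousOn {g : ℝ → ℝ≥0∞} {a b : ℝ} (hab : a ≤ b)
    (hg : ContinuousOn g (Icc a b)) (hgab : g a ≤ g b) {q : ℝ≥0∞} (hq0 : q ≠ 0) (hq1 : q ≤ 1)
    {P : ℕ → ℝ → Prop}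
    (hstep : ∀ k t t', a ≤ t → t ≤ t' → t' ≤ b → P k t → q * g t' ≤ g t → P (k + 1) t')
    {k : ℕ} (hk : P k a) {N : ℕ} (hN : g b ≤ q⁻¹ ^ N * g a) : P (k + N + 1) b := by
  have hqtop : q ≠ ⊤ := ne_top_of_le_ne_top ENNReal.one_ne_top hq1
  have key : ∀ j, ∃ t ∈ Icc a b, g t = min (q⁻¹ ^ j * g a) (g b) ∧ P (k + j) t := by
    intro j
    induction j with
    | zero => exact ⟨a, ⟨le_rfl, hab⟩, by simp [hgab], hk⟩
    | succ j ih =>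
      obtain ⟨t, ht, hgt, hP⟩ := ih
      have hle : g t ≤ min (q⁻¹ ^ (j + 1) * g a) (g b) := by
        rw [hgt]
        gcongr
        exacts [ENNReal.one_le_inv.2 hq1, j.le_succ]
      obtain ⟨t', ht', hgt'⟩ := intermediate_value_Icc ht.2 (hg.mono (Icc_subset_Icc_left ht.1))
        ⟨hle, min_le_right _ _⟩
      refine ⟨t', ⟨ht.1.trans ht'.1, ht'.2⟩, hgt', hstep _ _ _ ht.1 ht'.1 ht'.2 hP ?_⟩
      rw [hgt', hgt, mul_min]
      refine min_le_min (le_of_eq ?_) (mul_le_of_le_one_left' hq1)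
      calc q * (q⁻¹ ^ (j + 1) * g a) = q * q⁻¹ * (q⁻¹ ^ j * g a) := by ring
        _ = q⁻¹ ^ j * g a := by rw [ENNReal.mul_inv_cancel hq0 hqtop, one_mul]
  obtain ⟨t, ht, hgt, hP⟩ := key N
  refine hstep _ _ _ ht.1 ht.2 le_rfl hP ?_
  rw [hgt, min_eq_right hN]
  exact mul_le_of_le_one_left' hq1

def IsDoublingOnBalls {X : Type*} [PseudoMetricSpace X] [MeasurableSpace X] (ν : Measure X)
    (D : ℝ≥0∞) : Prop :=
  ∀ x r, 0 < r → ν (ball x (2 * r)) ≤ D * ν (ball x r)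

namespace IsDoublingOnBalls

variable {ι : Type*} [Fintype ι] {ν : Measure (ι → ℝ)} [IsFiniteMeasureOnCompacts ν]
  {D : ℝ≥0∞}

theorem measure_hyperplane_eq_zero (hν : IsDoublingOnBalls ν D) (hD : D ≠ ⊤)
    (i : ι) (c : ℝ) : ν {y | y i = c} = 0 := by
  refine measure_eq_zero_of_porous (measurableSet_eq_fun (measurable_pi_apply i) measurable_const)
    (ENNReal.mul_ne_top hD hD) fun y hy => ?_
  filter_upwards [self_mem_nhdsWithin] with r (hr : 0 < r)
  classical
  set y' : ι → ℝ := y - Pi.single i (r / 2)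
  have hyy' : dist y y' ≤ r / 2 := by
    rw [dist_pi_le_iff (by positivity)]
    intro j
    rcases eq_or_ne j i with rfl | hj
    · simp [y', abs_of_pos hr]
    · simpa [y', hj] using by positivity
  refine ⟨ball y' (r / 2), fun p hp => ?_, disjoint_left.2 fun p (hp : p i = c) hp' => ?_, ?_⟩
  · exact mem_closedBall.2
      ((dist_triangle p y' y).trans (by rw [dist_comm y']; linarith [mem_ball.1 hp]))
  · have h1 := (dist_le_pi_dist p y' i).trans_lt (mem_ball.1 hp')
    rw [Real.dist_eq] at h1
    simp only [y', Pi.sub_apply, Pi.single_eq_same, hp, show y i = c from hy] at h1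
    rw [sub_sub_cancel] at h1
    exact (le_abs_self _).not_gt h1
  · calc ν (closedBall y r) ≤ ν (ball y' (2 * (2 * (r / 2)))) := by
          refine measure_mono fun p hp => mem_ball.2 ?_
          linarith [dist_triangle p y y', mem_closedBall.1 hp]
      _ ≤ D * (D * ν (ball y' (r / 2))) := by
          refine (hν _ _ (by positivity)).trans ?_
          gcongr
          exact hν _ _ (by positivity)
      _ = D * D * ν (ball y' (r / 2)) := by ring

theorem measure_sphere_eq_zero (hν : IsDoublingOnBalls ν D) (hD : D ≠ ⊤)
    (x : ι → ℝ) {r : ℝ} (hr : 0 < r) : ν (sphere x r) = 0 := by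
  refine measure_mono_null (fun y (hy : dist y x = r) => ?_) (measure_iUnion_null fun i =>
    measure_union_null (hν.measure_hyperplane_eq_zero hD i (x i + r))
      (hν.measure_hyperplane_eq_zero hD i (x i - r)))
  have hle : ∀ j, |y j - x j| ≤ r := fun j => by
    rw [← Real.dist_eq]; exact (dist_le_pi_dist y x j).trans hy.le
  obtain ⟨i, hi⟩ : ∃ i, r ≤ |y i - x i| := by
    by_contra! h
    exact hy.not_lt ((dist_pi_lt_iff hr).2 fun j => by rw [Real.dist_eq]; exact h j)
  refine mem_iUnion.2 ⟨i, ?_⟩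
  rcases (abs_eq hr.le).1 (le_antisymm (hle i) hi) with h | h
  · exact Or.inl (show y i = x i + r by linarith)
  · exact Or.inr (show y i = x i - r by linarith)

theorem exists_ball_mul_measure_le_measure_inter (hν : IsDoublingOnBalls ν D) (hD : D ≠ ⊤)
    {q : ℝ≥0∞} (hq1 : q < 1) {K : Set (ι → ℝ)} (hK : MeasurableSet K) (hK0 : ν K ≠ 0)
    {ρ : ℝ} (hρ : 0 < ρ) :
    ∃ x ∈ K, ∃ r ∈ Ioo 0 ρ, ν (ball x r) ≠ 0 ∧ q * ν (ball x r) ≤ ν (K ∩ ball x r) := by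
  obtain ⟨x, hxK, hx⟩ := exists_mem_tendsto_measure_inter_div hK hK0
  obtain ⟨r, hr_dens, hr⟩ : ∃ r, q < ν (K ∩ closedBall x r) / ν (closedBall x r) ∧ r ∈ Ioo 0 ρ :=
    ((hx.eventually (lt_mem_nhds hq1)).and (Ioo_mem_nhdsGT hρ)).exists
  have hclosed : ball x r =ᵐ[ν] closedBall x r :=
    ball_ae_eq_closedBall (hν.measure_sphere_eq_zero hD x hr.1)
  rw [← measure_congr hclosed, ← measure_congr (ae_eq_set_inter (ae_eq_refl K) hclosed)]
    at hr_dens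
  have hpos : ν (ball x r) ≠ 0 := fun h0 => by
    simp [h0, measure_mono_null inter_subset_right h0] at hr_dens
  exact ⟨x, hxK, r, hr, hpos,
    (ENNReal.le_div_iff_mul_le (Or.inl hpos) (Or.inl measure_ball_lt_top.ne)).1 hr_dens.le⟩

theorem eventually_ball_subset (hν : IsDoublingOnBalls ν D) (hD : D ≠ ⊤) {q : ℝ≥0∞}
    (hq0 : q ≠ 0) (hq1 : q < 1) {K : Set (ι → ℝ)} (hK : MeasurableSet K) (hK0 : ν K ≠ 0)
    {x₀ : ι → ℝ} {ρ : ℝ} (hKρ : K ⊆ ball x₀ ρ) {H : ℕ → Set (ι → ℝ)} (hH0 : K ⊆ H 0)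
    (hH : ∀ k A z s, MeasurableSet A → A ⊆ H k → 0 < s → 0 < ν (ball z s) →
      q * ν (ball z s) ≤ ν (A ∩ ball z s) → ball z s ⊆ H (k + 1)) :
    ∀ᶠ N in atTop, ball x₀ ρ ⊆ H (N + 2) := by
  have hρ : 0 < ρ := by
    obtain ⟨y, hy⟩ := nonempty_of_measure_ne_zero hK0
    exact pos_of_mem_ball (hKρ hy)
  obtain ⟨x, hxK, r, ⟨hr0, hrρ⟩, hgr, hstart⟩ :=
    hν.exists_ball_mul_measure_le_measure_inter hD hq1 hK hK0 hρ
  set g : ℝ → ℝ≥0∞ := fun s => ν (ball x s)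
  have hg_mono : Monotone g := fun s s' h => measure_mono (ball_subset_ball h)
  have hN : ∀ᶠ N in atTop, g (2 * ρ) ≤ q⁻¹ ^ N * g r := by
    have h := ENNReal.Tendsto.mul_const (ENNReal.tendsto_pow_atTop_nhds_top_iff.2
      (ENNReal.one_lt_inv.2 hq1)) (Or.inl ENNReal.top_ne_zero) (b := g r)
    rw [ENNReal.top_mul hgr] at h
    exact (h.eventually (lt_mem_nhds measure_ball_lt_top)).mono fun N hN => hN.le
  filter_upwards [hN] with N hN
  have hstep : ∀ k t t', r ≤ t → t ≤ t' → t' ≤ 2 * ρ → ball x t ⊆ H k →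
      q * g t' ≤ g t → ball x t' ⊆ H (k + 1) := fun k t t' hrt htt' _ hP hq => by
    refine hH k _ x t' measurableSet_ball hP (hr0.trans_le (hrt.trans htt'))
      ((pos_iff_ne_zero.2 hgr).trans_le (hg_mono (hrt.trans htt'))) ?_
    rwa [inter_eq_left.2 (ball_subset_ball htt')]
  have hchain : ball x (2 * ρ) ⊆ H (1 + N + 1) :=
    chain_of_continuousOn (P := fun k t => ball x t ⊆ H k) (by linarith)
      (fun s hs => (continuousAt_measure_ball x (hν.measure_sphere_eq_zero hD x
        (hr0.trans_le hs.1))).continuousWithinAt) (hg_mono (by linarith)) hq0 hq1.le hstep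
      (hH 0 K x r hK hH0 hr0 (pos_iff_ne_zero.2 hgr) hstart) hN
  rw [show N + 2 = 1 + N + 1 by ring]
  exact (ball_subset_ball' (by linarith [mem_ball.1 (hKρ hxK), dist_comm x₀ x])).trans hchain

end IsDoublingOnBalls

theorem smul_vadd_set_distrib {M E : Type*} [Monoid M] [AddMonoid E] [DistribMulAction M E]
    (c : M) (v : E) (S : Set E) : c • (v +ᵥ S) = c • v +ᵥ c • S := by
  simp only [← image_smul, ← image_vadd, image_image, vadd_eq_add, smul_add]

theorem AffineMap.image_ball_eq_vadd_smul {V W : Type*} [NormedAddCommGroup V] [NormedSpace ℝ V]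
    [AddCommGroup W] [Module ℝ W] (T : V →ᵃ[ℝ] W) (z : V) {s : ℝ} (hs : 0 < s) :
    T '' ball z s = (T z - s • T 0) +ᵥ s • T '' ball 0 1 := by
  have hL : ∀ u, T.linear u = T u - T 0 := fun u => by simpa using T.linearMap_vsub u 0
  have key : ∀ u, T (z + s • u) = (T z - s • T 0) + s • T u := fun u => by
    rw [add_comm, ← vadd_eq_add, T.map_vadd, map_smul, hL, vadd_eq_add, smul_sub]
    abel
  ext w
  constructor
  · rintro ⟨y, hy, rfl⟩
    have hu : s⁻¹ • (y - z) ∈ ball (0 : V) 1 := by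
      rw [mem_ball_zero_iff, norm_smul, Real.norm_of_nonneg (inv_nonneg.2 hs.le),
        inv_mul_lt_one₀ hs, ← dist_eq_norm]
      exact hy
    refine ⟨s • T (s⁻¹ • (y - z)), smul_mem_smul_set (mem_image_of_mem T hu), ?_⟩
    change (T z - s • T 0) + _ = _
    rw [← key, smul_inv_smul₀ hs.ne', add_sub_cancel]
  · rintro ⟨_, ⟨_, ⟨u, hu, rfl⟩, rfl⟩, rfl⟩
    refine ⟨z + s • u, ?_, key u⟩
    rw [mem_ball, dist_eq_norm, add_sub_cancel_left, norm_smul, Real.norm_of_nonneg hs.le]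
    exact mul_lt_of_lt_one_right hs (mem_ball_zero_iff.1 hu)

theorem IsRect.exists_affineEquiv_image_ball {n : ℕ} {R : Set (EuclideanSpace ℝ (Fin n))}
    (hR : IsRect R) : ∃ T : (Fin n → ℝ) ≃ᵃ[ℝ] EuclideanSpace ℝ (Fin n), T '' ball 0 1 = R := by
  obtain ⟨f, S, ⟨a, b, hab, rfl⟩, rfl⟩ := hR
  have hh : ∀ i, (b i - a i) / 2 ≠ 0 := fun i => by linarith [hab i]
  let D : (Fin n → ℝ) ≃ᵃ[ℝ] (Fin n → ℝ) :=
    (LinearEquiv.piCongrRight fun i => LinearEquiv.smulOfNeZero ℝ ℝ _ (hh i)).toAffineEquiv.trans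
      (AffineEquiv.constVAdd ℝ _ ((a + b) / 2))
  refine ⟨D.trans ((EuclideanSpace.equiv (Fin n) ℝ).symm.toLinearEquiv.toAffineEquiv.trans
    f.toRealAffineIsometryEquiv.toAffineEquiv), ?_⟩
  simp only [AffineEquiv.coe_trans, image_comp]
  congr 1
  ext x
  simp only [D, mem_image, mem_ball_zero_iff, mem_ofPred_eq, mem_Ioo]
  constructor
  · rintro ⟨_, ⟨y, hy, rfl⟩, rfl⟩ i
    have hyi := abs_lt.1 ((norm_le_pi_norm y i).trans_lt hy)
    simp
    constructor <;> nlinarith [hab i]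
  · intro hx
    refine ⟨_, ⟨fun i => (x i - (a i + b i) / 2) / ((b i - a i) / 2), ?_, rfl⟩, ?_⟩
    · refine (pi_norm_lt_iff one_pos).2 fun i => ?_
      have hpos : 0 < (b i - a i) / 2 := by linarith [hab i]
      rw [Real.norm_eq_abs, abs_div, abs_of_pos hpos, div_lt_one hpos, abs_lt]
      constructor <;> linarith [hx i]
    · ext i
      simp [mul_div_cancel₀ _ (hh i)]

theorem HomothecyInvariant.vadd_smul_mem {n : ℕ} {𝔊 : Set (Set (EuclideanSpace ℝ (Fin n)))}
    (h𝔊 : HomothecyInvariant 𝔊) {R : Set (EuclideanSpace ℝ (Fin n))} (hR : R ∈ 𝔊)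
    (p : EuclideanSpace ℝ (Fin n)) {s : ℝ} (hs : 0 < s) : p +ᵥ s • R ∈ 𝔊 :=
  (h𝔊 _ ((h𝔊 R hR).2 s hs)).1 p

section Halo

variable {n : ℕ} {μ : Measure (EuclideanSpace ℝ (Fin n))} {𝔊 : Set (Set (EuclideanSpace ℝ (Fin n)))}

theorem DoublingWrt.measure_vadd_smul_le {Δ : ℝ} (hμ : DoublingWrt μ 𝔊 Δ)
    (h𝔊 : HomothecyInvariant 𝔊) {R : Set (EuclideanSpace ℝ (Fin n))} (hR : R ∈ 𝔊)
    {p p' : EuclideanSpace ℝ (Fin n)} {s : ℝ} (hs : 0 < s)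
    (hsub : p +ᵥ s • R ⊆ p' +ᵥ (2 * s) • R) :
    μ (p' +ᵥ (2 * s) • R) ≤ ENNReal.ofReal Δ * μ (p +ᵥ s • R) := by
  have key : (p' - (2 : ℝ) • p) +ᵥ (2 : ℝ) • (p +ᵥ s • R) = p' +ᵥ (2 * s) • R := by
    rw [smul_vadd_set_distrib, smul_smul, vadd_vadd, sub_add_cancel]
  rw [← key] at hsub ⊢
  exact hμ _ (h𝔊.vadd_smul_mem hR p hs) _ hsub

theorem le_maxOp {f : EuclideanSpace ℝ (Fin n) → ℝ} {x : EuclideanSpace ℝ (Fin n)}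
    {B : Set (EuclideanSpace ℝ (Fin n))} (hB : B ∈ 𝔊) (hx : x ∈ B) (hμB : 0 < μ B) :
    (∫⁻ y in B, ENNReal.ofReal |f y| ∂μ) / μ B ≤ maxOp μ 𝔊 f x :=
  le_iSup₂_of_le B hB (le_iSup₂_of_le hx hμB le_rfl)

theorem subset_Hiter_succ {β : ℝ} {E A B : Set (EuclideanSpace ℝ (Fin n))} {k : ℕ} (hB : B ∈ 𝔊)
    (hμB : 0 < μ B) (hμB' : μ B ≠ ⊤) (hA : MeasurableSet A) (hAH : A ⊆ Hiter μ 𝔊 β E k)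
    (h : ENNReal.ofReal β * μ B ≤ μ (A ∩ B)) : B ⊆ Hiter μ 𝔊 β E (k + 1) := by
  intro x hx
  show ENNReal.ofReal β ≤ maxOp μ 𝔊 ((Hiter μ 𝔊 β E k).indicator 1) x
  refine le_trans ?_ (le_maxOp hB hx hμB)
  rw [ENNReal.le_div_iff_mul_le (Or.inl hμB.ne') (Or.inl hμB')]
  refine h.trans ?_
  rw [← Measure.restrict_apply hA, ← lintegral_indicator_one hA]
  refine lintegral_mono fun y => ?_
  by_cases hy : y ∈ A
  · simp [hy, hAH hy]
  · simp [hy]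

theorem eventually_subset_Hiter [IsLocallyFiniteMeasure μ] (hG : ∀ R ∈ 𝔊, IsRect R)
    (h𝔊 : HomothecyInvariant 𝔊) {Δ : ℝ} (hdbl : DoublingWrt μ 𝔊 Δ) {β : ℝ} (hβ0 : 0 < β)
    (hβ1 : β < 1) {E R : Set (EuclideanSpace ℝ (Fin n))} (hE : MeasurableSet E) (hR : R ∈ 𝔊)
    (hER : μ (E ∩ R) ≠ 0) : ∀ᶠ N in atTop, R ⊆ Hiter μ 𝔊 β E (N + 2) := by
  obtain ⟨T, hTR⟩ := (hG R hR).exists_affineEquiv_image_ball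
  have hT : MeasurableEmbedding T :=
    (AffineEquiv.toContinuousAffineEquiv T).toHomeomorph.measurableEmbedding
  set ν := μ.comap T
  have hν : ∀ A, ν A = μ (T '' A) := hT.comap_apply μ
  have : IsFiniteMeasureOnCompacts ν :=
    IsFiniteMeasureOnCompacts.comap' μ (AffineEquiv.toContinuousAffineEquiv T).continuous hT
  have hB : ∀ z {s : ℝ}, 0 < s → T '' ball z s = (T z - s • T 0) +ᵥ s • R := fun z s hs => by
    rw [← hTR]
    exact T.toAffineMap.image_ball_eq_vadd_smul z hs
  have hdoubling : IsDoublingOnBalls ν (ENNReal.ofReal Δ) := fun z s hs => by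
    rw [hν, hν, hB z hs, hB z (by positivity : (0 : ℝ) < 2 * s)]
    refine hdbl.measure_vadd_smul_le h𝔊 hR hs ?_
    rw [← hB z hs, ← hB z (by positivity : (0 : ℝ) < 2 * s)]
    exact image_mono (ball_subset_ball (by linarith))
  have hK : ν (T ⁻¹' E ∩ ball 0 1) = μ (E ∩ R) := by
    rw [hν, image_inter T.injective, image_preimage_eq _ T.surjective, hTR]
  have hstep : ∀ k A z s, MeasurableSet A → A ⊆ T ⁻¹' Hiter μ 𝔊 β E k → 0 < s →
      0 < ν (ball z s) → ENNReal.ofReal β * ν (ball z s) ≤ ν (A ∩ ball z s) →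
      ball z s ⊆ T ⁻¹' Hiter μ 𝔊 β E (k + 1) := fun k A z s hA hAH hs hpos hq => by
    rw [← image_subset_iff]
    refine subset_Hiter_succ (hB z hs ▸ h𝔊.vadd_smul_mem hR _ hs) (hν _ ▸ hpos)
      (hν _ ▸ measure_ball_lt_top.ne) (hT.measurableSet_image.2 hA) (image_subset_iff.2 hAH) ?_
    rwa [← image_inter T.injective, ← hν, ← hν]
  filter_upwards [hdoubling.eventually_ball_subset ENNReal.ofReal_ne_top
    (ENNReal.ofReal_pos.2 hβ0).ne' (ENNReal.ofReal_lt_one.2 hβ1)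
    ((hE.preimage hT.measurable).inter measurableSet_ball) (hK ▸ hER) inter_subset_right
    inter_subset_left hstep] with N hN
  rw [← hTR, image_subset_iff]
  exact hN

end Halo

end

theorem statement8_general (n : ℕ) (𝔊 : Set (Set (EuclideanSpace ℝ (Fin n))))
    (hG : ∀ R ∈ 𝔊, IsRect R) (hhom : HomothecyInvariant 𝔊)
    (μ : Measure (EuclideanSpace ℝ (Fin n)))
    (hloc : IsLocallyFiniteMeasure μ)
    (Δ : ℝ) (hdbl : DoublingWrt μ 𝔊 Δ)
    (β : ℝ) (hβ : β ∈ Set.Ioo (0 : ℝ) 1)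
    (E : Set (EuclideanSpace ℝ (Fin n))) (hE : MeasurableSet E)
    (R : Set (EuclideanSpace ℝ (Fin n))) (hR : R ∈ 𝔊) (hRpos : 0 < μ R)
    (α : ℝ) (hα : α ∈ Set.Ioo (0 : ℝ) β)
    (hratio : μ (E ∩ R) = ENNReal.ofReal α * μ R) :
    ∃ N : ℕ, Δ ≤ β ^ (-((N : ℤ) + 1)) ∧
      ENNReal.ofReal (1 / β) * μ (E ∩ R) ≤ μ (R ∩ Hiter μ 𝔊 β E (N + 2)) := by
  have := hloc
  obtain ⟨hβ0, hβ1⟩ := hβ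
  have hER : μ (E ∩ R) ≠ 0 := by
    rw [hratio]
    exact mul_ne_zero (ENNReal.ofReal_pos.2 hα.1).ne' hRpos.ne'
  have hpow : ∀ᶠ N : ℕ in atTop, Δ ≤ β ^ (-((N : ℤ) + 1)) := by
    have h := (tendsto_pow_atTop_atTop_of_one_lt (one_lt_inv₀ hβ0 |>.2 hβ1)).comp
      (tendsto_add_atTop_nat 1)
    filter_upwards [h.eventually_ge_atTop Δ] with N hN
    rw [show -((N : ℤ) + 1) = -((N + 1 : ℕ) : ℤ) by push_cast; ring, zpow_neg, zpow_natCast,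
      ← inv_pow]
    exact hN
  obtain ⟨N, hΔN, hRN⟩ :=
    (hpow.and (eventually_subset_Hiter hG hhom hdbl hβ0 hβ1 hE hR hER)).exists
  refine ⟨N, hΔN, ?_⟩
  rw [inter_eq_left.2 hRN, hratio, ← mul_assoc, ← ENNReal.ofReal_mul (by positivity)]
  refine mul_le_of_le_one_left' (ENNReal.ofReal_le_one.2 ?_)
  rw [one_div_mul_eq_div, div_le_one hβ0]
  exact hα.2.le

/-- Lemma `l.interm` of the paper. Under the hypotheses of Lemma
`l.main`, there is a nonnegative integer `N` with `β^{-(N+1)} ≥ Δ_μ` such that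
`μ(R ∩ H_β^{N+2}(E)) ≥ (1/β)·μ(E ∩ R)`. -/
theorem statement8 (n : ℕ) (𝔊 : Set (Set (EuclideanSpace ℝ (Fin n))))
    (hG : ∀ R ∈ 𝔊, IsRect R) (hhom : HomothecyInvariant 𝔊)
    (μ : Measure (EuclideanSpace ℝ (Fin n)))
    (hloc : IsLocallyFiniteMeasure μ) (hμ : μ ≠ 0)
    (Δ : ℝ) (hΔ : 1 < Δ) (hdbl : DoublingWrt μ 𝔊 Δ)
    (β : ℝ) (hβ : β ∈ Set.Ioo (0 : ℝ) 1)
    (E : Set (EuclideanSpace ℝ (Fin n))) (hE : MeasurableSet E)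
    (R : Set (EuclideanSpace ℝ (Fin n))) (hR : R ∈ 𝔊) (hRpos : 0 < μ R)
    (α : ℝ) (hα : α ∈ Set.Ioo (0 : ℝ) β)
    (hratio : μ (E ∩ R) = ENNReal.ofReal α * μ R) :
    ∃ N : ℕ, Δ ≤ β ^ (-((N : ℤ) + 1)) ∧
      ENNReal.ofReal (1 / β) * μ (E ∩ R) ≤ μ (R ∩ Hiter μ 𝔊 β E (N + 2)) :=
  statement8_general n 𝔊 hG hhom μ hloc Δ hdbl β hβ E hE R hR hRpos α hα hratio
end

section
/- Let K be a convex set contained in the unit cube Q = [0,1]ⁿ and let μ be a nonzero locally finite nonnegative Borel measure on ℝⁿ which is doubling with respect to the family of all axis-parallel cubes with constant δ_μ. Then for every ε with 0 < ε < 1, μ({x ∈ ℝⁿ \ K : dist(x, K) < ε}) ≤ 9·δ_μ^{4 + ⌈log₂(34√n)⌉}·(log₂(1/ε))^{−1}·μ(Q). -/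
open MeasureTheory Set Filter
open scoped ENNReal Topology Pointwise

/-!
Write `A_ε = {x ∉ K : d(x, K) < ε}` and `S_t = {t/2 ≤ d(·, K) < t}`, and let `2^k ≥ 25√n`.
For `t ≥ ε` we have `μ(A_ε) ≤ δ^k μ(S_t)`: moving from the nearest point of `K` along the
outward normal, convexity puts every point of `A_ε` within `9t/4` of the level set
`{d(·, K) = 3t/4}`. A maximal `t/2`-separated subset of that level set carries disjoint cubes
of half-side `5t/2^k` inside `S_t`, and their `2^k`-fold dilates cover `A_ε`.
The shells `S_{2^{-j}}`, `0 ≤ j ≤ log₂(1/ε)`, are disjoint and lie in the `1`-neighbourhood of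
`Q`, whose measure is at most `δ² μ(Q)`; hence `log₂(1/ε) μ(A_ε) ≤ δ^{k+2} μ(Q)`.
-/

open Metric
open scoped NNReal

namespace Metric

variable {X : Type*} [PseudoEMetricSpace X]

theorem exists_maximal_isSeparated (ε : ℝ≥0∞) (s : Set X) :
    ∃ N, Maximal (fun N ↦ N ⊆ s ∧ IsSeparated ε N) N := by
  refine zorn_subset {N | N ⊆ s ∧ IsSeparated ε N} fun c hcS hc ↦ ?_
  refine ⟨⋃₀ c, ⟨sUnion_subset fun N hN ↦ (hcS hN).1, ?_⟩, fun N hN ↦ subset_sUnion_of_mem hN⟩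
  exact (pairwise_sUnion hc.directedOn).2 fun N hN ↦ (hcS hN).2

theorem IsSeparated.countable [TopologicalSpace.SeparableSpace X] {ε : ℝ≥0∞} {N : Set X}
    (hε : ε ≠ 0) (hN : IsSeparated ε N) : N.Countable := by
  refine PairwiseDisjoint.countable_of_isOpen (s := fun y ↦ eball y (ε / 2))
    (fun y hy y' hy' hne ↦ eball_disjoint ?_) (fun _ _ ↦ isOpen_eball)
    fun y _ ↦ ⟨y, mem_eball_self (ENNReal.half_pos hε)⟩
  exact (ENNReal.add_halves ε).trans_le (hN hy hy' hne).le

end Metric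

section Shell

variable {X : Type*} [PseudoMetricSpace X] {K : Set X} {t t' : ℝ}

def distShell (K : Set X) (t : ℝ) : Set X :=
  {x | t / 2 ≤ infDist x K ∧ infDist x K < t}

theorem measurableSet_distShell [MeasurableSpace X] [OpensMeasurableSpace X] :
    MeasurableSet (distShell K t) :=
  (measurableSet_le measurable_const (continuous_infDist_pt K).measurable).inter
    (measurableSet_lt (continuous_infDist_pt K).measurable measurable_const)

theorem disjoint_distShell (h : t' ≤ t / 2) : Disjoint (distShell K t) (distShell K t') :=
  disjoint_left.2 fun _ hx hx' ↦ (hx'.2.trans_le h).not_ge hx.1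

theorem distShell_subset_thickening (ht : 0 < t) : distShell K t ⊆ thickening t K := by
  intro x hx
  rcases K.eq_empty_or_nonempty with rfl | hK
  · exact absurd hx.1 (by simp [ht])
  · exact (mem_thickening_iff_infDist_lt hK).2 hx.2

end Shell

section Convex

variable {E : Type*} [NormedAddCommGroup E] [InnerProductSpace ℝ E] {K : Set E}

theorem Convex.interior_closure_subset [FiniteDimensional ℝ E] (hK : Convex ℝ K) :
    interior (closure K) ⊆ K := by
  intro z hz
  have hspan : affineSpan ℝ K = ⊤ := by
    refine top_le_iff.1 ?_
    rw [← hK.closure.interior_nonempty_iff_affineSpan_eq_top.1 ⟨z, hz⟩]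
    exact affineSpan_le.2 <| closure_minimal (subset_affineSpan ℝ K)
      (affineSpan ℝ K).closed_of_finiteDimensional
  rw [hK.interior_closure_eq_interior_of_nonempty_interior
    (hK.interior_nonempty_iff_affineSpan_eq_top.2 hspan)] at hz
  exact interior_subset hz

theorem infDist_add_smul_eq {p ν : E} (hp : p ∈ closure K) (hν : ‖ν‖ = 1)
    (hpν : ∀ w ∈ K, inner ℝ ν (w - p) ≤ 0) {s : ℝ} (hs : 0 ≤ s) :
    infDist (p + s • ν) K = s := by
  refine le_antisymm ?_ ((le_infDist (closure_nonempty_iff.1 ⟨p, hp⟩)).2 fun w hw ↦ ?_)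
  · rw [← infDist_closure]
    refine (infDist_le_dist_of_mem hp).trans_eq ?_
    simp [norm_smul, hν, abs_of_nonneg hs]
  · calc s ≤ inner ℝ ν (p + s • ν - w) := by
          have : p + s • ν - w = s • ν - (w - p) := by abel
          rw [this, inner_sub_right, real_inner_smul_right, real_inner_self_eq_norm_sq, hν]
          linarith [hpν w hw]
      _ ≤ ‖ν‖ * ‖p + s • ν - w‖ := real_inner_le_norm _ _
      _ = dist (p + s • ν) w := by rw [hν, one_mul, dist_eq_norm]

variable [FiniteDimensional ℝ E]

theorem Convex.exists_infDist_eq_of_notMem_closure (hK : Convex ℝ K) (hKne : K.Nonempty)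
    {x : E} (hx : x ∉ closure K) {s : ℝ} (hs : 0 ≤ s) :
    ∃ y, infDist y K = s ∧ dist x y ≤ infDist x K + s := by
  obtain ⟨p, hp, hxp⟩ := exists_mem_closure_infDist_eq_dist hKne x
  have hmin : ‖x - p‖ = ⨅ w : closure K, ‖x - w‖ := by
    simp only [← dist_eq_norm, ← hxp, ← infDist_closure (s := K), infDist_eq_iInf]
  have hnormal := (norm_eq_iInf_iff_real_inner_le_zero hK.closure hp).1 hmin
  have hxp0 : x - p ≠ 0 := by
    rw [sub_ne_zero]
    rintro rfl
    exact hx hp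
  set ν := ‖x - p‖⁻¹ • (x - p)
  have hν : ‖ν‖ = 1 := by
    rw [norm_smul, norm_inv, norm_norm, inv_mul_cancel₀ (norm_ne_zero_iff.2 hxp0)]
  refine ⟨p + s • ν, infDist_add_smul_eq hp hν (fun w hw ↦ ?_) hs, ?_⟩
  · rw [real_inner_smul_left]
    exact mul_nonpos_of_nonneg_of_nonpos (by positivity) (hnormal w (subset_closure hw))
  · calc dist x (p + s • ν) ≤ dist x p + dist p (p + s • ν) := dist_triangle _ _ _
      _ = infDist x K + s := by
          rw [← hxp, dist_self_add_right, norm_smul, hν, Real.norm_of_nonneg hs, mul_one]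

theorem Convex.exists_infDist_eq_of_notMem (hK : Convex ℝ K) {x : E} (hx : x ∉ K)
    {ε : ℝ} (hxε : x ∈ Metric.thickening ε K) {s : ℝ} (hs : 0 ≤ s) :
    ∃ y, infDist y K = s ∧ dist x y < ε + s := by
  obtain ⟨w, hwK, hxw⟩ := mem_thickening_iff.1 hxε
  have hdx : infDist x K < ε := (infDist_le_dist_of_mem hwK).trans_lt hxw
  have hx' : x ∈ closure (closure K)ᶜ := by
    rw [closure_compl]
    exact fun h ↦ hx (hK.interior_closure_subset h)
  obtain ⟨x', hx'K, hxx'⟩ := Metric.mem_closure_iff.1 hx' ((ε - infDist x K) / 2) (by linarith)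
  obtain ⟨y, hyK, hx'y⟩ := hK.exists_infDist_eq_of_notMem_closure ⟨w, hwK⟩ hx'K hs
  refine ⟨y, hyK, ?_⟩
  have := infDist_le_infDist_add_dist (x := x') (y := x) (s := K)
  linarith [dist_triangle x x' y, dist_comm x x']

end Convex

section AxisCube

variable {n : ℕ}

def axisCube (c : EuclideanSpace ℝ (Fin n)) (h : ℝ) : Set (EuclideanSpace ℝ (Fin n)) :=
  {x | ∀ i, x i ∈ Ioo (c i - h) (c i + h)}

theorem isAxisCube_axisCube (c : EuclideanSpace ℝ (Fin n)) {h : ℝ} (hh : 0 < h) :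
    IsAxisCube (axisCube c h) := by
  refine ⟨fun i ↦ c i - h, 2 * h, by positivity, ?_⟩
  ext x
  simp only [axisCube, mem_ofPred_eq, mem_Ioo]
  exact forall_congr' fun i ↦ and_congr Iff.rfl (by constructor <;> intro <;> linarith)

theorem isOpen_axisCube (c : EuclideanSpace ℝ (Fin n)) (h : ℝ) : IsOpen (axisCube c h) := by
  simp only [axisCube, ofPred_forall]
  exact isOpen_iInter_of_finite fun i ↦ isOpen_Ioo.preimage (by fun_prop)

theorem axisCube_mono (c : EuclideanSpace ℝ (Fin n)) {h h' : ℝ} (hh : h ≤ h') :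
    axisCube c h ⊆ axisCube c h' :=
  fun _ hx i ↦ ⟨by linarith [(hx i).1], by linarith [(hx i).2]⟩

theorem vadd_two_smul_axisCube (c : EuclideanSpace ℝ (Fin n)) (h : ℝ) :
    -c +ᵥ (2 : ℝ) • axisCube c h = axisCube c (2 * h) := by
  ext x
  constructor
  · rintro ⟨_, ⟨z, hz, rfl⟩, rfl⟩ i
    simp only [vadd_eq_add, PiLp.add_apply, PiLp.neg_apply, PiLp.smul_apply, smul_eq_mul]
    exact ⟨by linarith [(hz i).1], by linarith [(hz i).2]⟩
  · intro hx
    refine ⟨x + c, ⟨(2 : ℝ)⁻¹ • (x + c), fun i ↦ ?_, by simp⟩, by simp⟩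
    simp only [PiLp.smul_apply, PiLp.add_apply, smul_eq_mul]
    exact ⟨by linarith [(hx i).1], by linarith [(hx i).2]⟩

theorem mem_axisCube_of_dist_lt {x c : EuclideanSpace ℝ (Fin n)} {h : ℝ} (hx : dist x c < h) :
    x ∈ axisCube c h := fun i ↦ by
  have := abs_lt.1 (((Real.dist_eq _ _).symm.trans_le (PiLp.dist_apply_le x c i)).trans_lt hx)
  exact ⟨by linarith [this.1], by linarith [this.2]⟩

theorem dist_le_of_mem_axisCube {x c : EuclideanSpace ℝ (Fin n)} {h : ℝ} (hh : 0 ≤ h)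
    (hx : x ∈ axisCube c h) : dist x c ≤ Real.sqrt n * h := by
  rw [EuclideanSpace.dist_eq, ← Real.sqrt_sq hh, ← Real.sqrt_mul n.cast_nonneg]
  refine Real.sqrt_le_sqrt ?_
  calc ∑ i, dist (x i) (c i) ^ 2 ≤ ∑ _i : Fin n, h ^ 2 := by
        refine Finset.sum_le_sum fun i _ ↦ ?_
        rw [Real.dist_eq, sq_abs]
        exact sq_le_sq' (by linarith [(hx i).1]) (by linarith [(hx i).2])
    _ = n * h ^ 2 := by simp

end AxisCube

section Doubling

variable {n : ℕ} {μ : Measure (EuclideanSpace ℝ (Fin n))} {δ : ℝ}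

theorem DoublingWrt.measure_axisCube_two_mul_le (hdbl : DoublingWrt μ {C | IsAxisCube C} δ)
    (c : EuclideanSpace ℝ (Fin n)) {h : ℝ} (hh : 0 < h) :
    μ (axisCube c (2 * h)) ≤ ENNReal.ofReal δ * μ (axisCube c h) := by
  rw [← vadd_two_smul_axisCube]
  refine hdbl _ (isAxisCube_axisCube c hh) (-c) ?_
  rw [vadd_two_smul_axisCube]
  exact axisCube_mono c (by linarith)

theorem DoublingWrt.measure_axisCube_two_pow_mul_le (hdbl : DoublingWrt μ {C | IsAxisCube C} δ)
    (c : EuclideanSpace ℝ (Fin n)) {h : ℝ} (hh : 0 < h) (k : ℕ) :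
    μ (axisCube c (2 ^ k * h)) ≤ ENNReal.ofReal δ ^ k * μ (axisCube c h) := by
  induction k with
  | zero => simp
  | succ k ih =>
    calc μ (axisCube c (2 ^ (k + 1) * h)) = μ (axisCube c (2 * (2 ^ k * h))) := by ring_nf
      _ ≤ ENNReal.ofReal δ * μ (axisCube c (2 ^ k * h)) :=
          hdbl.measure_axisCube_two_mul_le c (by positivity)
      _ ≤ ENNReal.ofReal δ ^ (k + 1) * μ (axisCube c h) := by
          rw [pow_succ', mul_assoc]
          gcongr

theorem DoublingWrt.measure_le_of_pairwiseDisjoint_axisCube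
    (hdbl : DoublingWrt μ {C | IsAxisCube C} δ) {h : ℝ} (hh : 0 < h) {k : ℕ}
    {N A B : Set (EuclideanSpace ℝ (Fin n))} (hN : N.Countable)
    (hdisj : N.PairwiseDisjoint (axisCube · h)) (hA : A ⊆ ⋃ y ∈ N, axisCube y (2 ^ k * h))
    (hB : ∀ y ∈ N, axisCube y h ⊆ B) :
    μ A ≤ ENNReal.ofReal δ ^ k * μ B :=
  calc μ A ≤ ∑' y : N, μ (axisCube y (2 ^ k * h)) :=
        (measure_mono hA).trans (measure_biUnion_le μ hN _)
    _ ≤ ∑' y : N, ENNReal.ofReal δ ^ k * μ (axisCube y h) :=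
        ENNReal.tsum_le_tsum fun y ↦ hdbl.measure_axisCube_two_pow_mul_le y hh k
    _ = ENNReal.ofReal δ ^ k * μ (⋃ y ∈ N, axisCube y h) := by
        rw [ENNReal.tsum_mul_left,
          measure_biUnion hN hdisj fun y _ ↦ (isOpen_axisCube y h).measurableSet]
    _ ≤ ENNReal.ofReal δ ^ k * μ B := by gcongr; exact iUnion₂_subset hB

end Doubling

section Annulus

variable {n : ℕ} {μ : Measure (EuclideanSpace ℝ (Fin n))} {δ : ℝ}
  {K : Set (EuclideanSpace ℝ (Fin n))}

theorem DoublingWrt.measure_thickening_diff_le_distShell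
    (hdbl : DoublingWrt μ {C | IsAxisCube C} δ) (hK : Convex ℝ K) {ε t : ℝ} (hε : 0 < ε)
    (hεt : ε ≤ t) {k : ℕ} (hk : 25 * Real.sqrt n ≤ 2 ^ k) :
    μ (thickening ε K \ K) ≤ ENNReal.ofReal δ ^ k * μ (distShell K t) := by
  have ht : 0 < t := hε.trans_le hεt
  set r : ℝ≥0 := (t / 2).toNNReal
  have hr : (r : ℝ) = t / 2 := Real.coe_toNNReal _ (by positivity)
  obtain ⟨N, hN⟩ := exists_maximal_isSeparated r {y | infDist y K = 3 * t / 4}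
  set h := 5 * t / 2 ^ k
  have hh : 0 < h := by positivity
  have hcube : ∀ y, ∀ z ∈ axisCube y h, dist z y ≤ t / 5 := fun y z hz ↦ by
    refine (dist_le_of_mem_axisCube hh.le hz).trans ?_
    calc Real.sqrt n * h = 25 * Real.sqrt n * t / (5 * 2 ^ k) := by ring
      _ ≤ 2 ^ k * t / (5 * 2 ^ k) := by gcongr
      _ = t / 5 := by field_simp
  refine hdbl.measure_le_of_pairwiseDisjoint_axisCube hh
    (hN.prop.2.countable (by simpa [r] using ht)) (fun y hy y' hy' hne ↦ ?_) ?_ ?_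
  · have hsep : ↑r < edist y y' := hN.prop.2 hy hy' hne
    rw [edist_nndist, ENNReal.coe_lt_coe, ← NNReal.coe_lt_coe, coe_nndist, hr] at hsep
    refine disjoint_left.2 fun z hz hz' ↦ ?_
    linarith [dist_triangle_left y y' z, hcube y z hz, hcube y' z hz']
  · rintro x ⟨hxε, hxK⟩
    obtain ⟨y, hyK, hxy⟩ := hK.exists_infDist_eq_of_notMem hxK hxε (s := 3 * t / 4) (by positivity)
    obtain ⟨y', hy'N, hyy'⟩ := mem_iUnion₂.1 <|
      (IsCover.of_maximal_isSeparated hN).subset_iUnion_closedBall hyK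
    refine mem_iUnion₂.2 ⟨y', hy'N, mem_axisCube_of_dist_lt ?_⟩
    rw [mem_closedBall, hr] at hyy'
    have : 2 ^ k * h = 5 * t := by simp only [h]; field_simp
    linarith [dist_triangle x y y']
  · intro y hy z hz
    have hyK : infDist y K = 3 * t / 4 := hN.prop.1 hy
    have hzy := hcube y z hz
    constructor
    · linarith [infDist_le_infDist_add_dist (x := y) (y := z) (s := K), dist_comm y z]
    · linarith [infDist_le_infDist_add_dist (x := z) (y := y) (s := K)]

end Annulus

section UnitCube

variable {n : ℕ} {μ : Measure (EuclideanSpace ℝ (Fin n))} {δ : ℝ}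

theorem DoublingWrt.measure_thickening_one_unitCube_le
    (hdbl : DoublingWrt μ {C | IsAxisCube C} δ) :
    μ (thickening 1 {x : EuclideanSpace ℝ (Fin n) | ∀ i, x i ∈ Icc (0 : ℝ) 1}) ≤
      ENNReal.ofReal δ ^ 2 * μ {x : EuclideanSpace ℝ (Fin n) | ∀ i, x i ∈ Icc (0 : ℝ) 1} := by
  set c : EuclideanSpace ℝ (Fin n) := WithLp.toLp 2 fun _ ↦ 1 / 2
  calc μ (thickening 1 _) ≤ μ (axisCube c (2 ^ 2 * (1 / 2))) := by
        refine measure_mono fun x hx ↦ ?_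
        obtain ⟨w, hw, hxw⟩ := mem_thickening_iff.1 hx
        have hxw := mem_axisCube_of_dist_lt hxw
        intro i
        simp only [c, mem_Ioo]
        constructor <;> linarith [(hxw i).1, (hxw i).2, (hw i).1, (hw i).2]
    _ ≤ ENNReal.ofReal δ ^ 2 * μ (axisCube c (1 / 2)) :=
        hdbl.measure_axisCube_two_pow_mul_le c (by norm_num) 2
    _ ≤ _ := by
        gcongr
        intro x hx i
        have hxi := hx i
        simp only [c, mem_Ioo] at hxi
        constructor <;> linarith

end UnitCube

section Counting

variable {n : ℕ} {μ : Measure (EuclideanSpace ℝ (Fin n))} {δ : ℝ}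
  {K : Set (EuclideanSpace ℝ (Fin n))}

theorem pairwise_disjoint_distShell_half_pow {X : Type*} [PseudoMetricSpace X] (K : Set X) :
    Pairwise (Function.onFun Disjoint fun j : ℕ ↦ distShell K ((1 / 2 : ℝ) ^ j)) :=
  (pairwise_disjoint_on _).2 fun i j hij ↦ disjoint_distShell <|
    calc (1 / 2 : ℝ) ^ j ≤ (1 / 2) ^ (i + 1) := pow_le_pow_of_le_one (by norm_num) (by norm_num) hij
      _ = (1 / 2) ^ i / 2 := by ring

theorem DoublingWrt.natCast_mul_measure_thickening_diff_le
    (hdbl : DoublingWrt μ {C | IsAxisCube C} δ) (hK : Convex ℝ K)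
    (hKQ : K ⊆ {x | ∀ i, x i ∈ Icc (0 : ℝ) 1}) {ε : ℝ} (hε : 0 < ε) {k : ℕ}
    (hk : 25 * Real.sqrt n ≤ 2 ^ k) {N : ℕ} (hN : ∀ j < N, ε ≤ (1 / 2 : ℝ) ^ j) :
    N * μ (thickening ε K \ K) ≤
      ENNReal.ofReal δ ^ (k + 2) * μ {x : EuclideanSpace ℝ (Fin n) | ∀ i, x i ∈ Icc (0 : ℝ) 1} :=
  calc N * μ (thickening ε K \ K) = ∑ _j ∈ Finset.range N, μ (thickening ε K \ K) := by simp
    _ ≤ ∑ j ∈ Finset.range N, ENNReal.ofReal δ ^ k * μ (distShell K ((1 / 2 : ℝ) ^ j)) :=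
        Finset.sum_le_sum fun j hj ↦
          hdbl.measure_thickening_diff_le_distShell hK hε (hN j (Finset.mem_range.1 hj)) hk
    _ = ENNReal.ofReal δ ^ k * μ (⋃ j ∈ Finset.range N, distShell K ((1 / 2 : ℝ) ^ j)) := by
        rw [← Finset.mul_sum, measure_biUnion_finset
          ((pairwise_disjoint_distShell_half_pow K).set_pairwise _)
          fun _ _ ↦ measurableSet_distShell]
    _ ≤ ENNReal.ofReal δ ^ k * μ (thickening 1 {x | ∀ i, x i ∈ Icc (0 : ℝ) 1}) := by
        gcongr
        refine iUnion₂_subset fun j _ ↦ (distShell_subset_thickening (by positivity)).trans ?_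
        exact (thickening_mono (pow_le_one₀ (by norm_num) (by norm_num)) K).trans
          (thickening_subset_of_subset 1 hKQ)
    _ ≤ ENNReal.ofReal δ ^ k * (ENNReal.ofReal δ ^ 2 * μ {x | ∀ i, x i ∈ Icc (0 : ℝ) 1}) := by
        gcongr
        exact hdbl.measure_thickening_one_unitCube_le
    _ = _ := by ring

end Counting

theorem le_two_pow_toNat_ceil_logb {x : ℝ} (hx : 0 ≤ x) : x ≤ 2 ^ ⌈Real.logb 2 x⌉.toNat := by
  rcases hx.eq_or_lt with rfl | hx
  · positivity
  calc x = 2 ^ Real.logb 2 x := (Real.rpow_logb two_pos (by norm_num) hx).symm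
    _ ≤ 2 ^ ((⌈Real.logb 2 x⌉.toNat : ℤ) : ℝ) := by
        gcongr
        · norm_num
        · exact (Int.le_ceil _).trans (by exact_mod_cast Int.self_le_toNat _)
    _ = 2 ^ ⌈Real.logb 2 x⌉.toNat := by norm_cast

theorem le_half_pow_of_le_logb {ε : ℝ} (hε : 0 < ε) {j : ℕ} (hj : (j : ℝ) ≤ Real.logb 2 (1 / ε)) :
    ε ≤ (1 / 2 : ℝ) ^ j := by
  rw [Real.le_logb_iff_rpow_le one_lt_two (by positivity), Real.rpow_natCast] at hj
  rw [one_div_pow, le_one_div hε (by positivity)]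
  exact hj

theorem ENNReal.le_ofReal_inv_mul_of_natCast_mul_le {a b : ℝ≥0∞} {N : ℕ} {L : ℝ} (hL : 0 < L)
    (hLN : L ≤ N) (h : N * a ≤ b) : a ≤ ENNReal.ofReal L⁻¹ * b := by
  have hN : (N : ℝ≥0∞) ≠ 0 := by
    have : (0 : ℝ) < N := hL.trans_le hLN
    exact_mod_cast this.ne'
  calc a ≤ (N : ℝ≥0∞)⁻¹ * b := by
        rw [← ENNReal.div_eq_inv_mul, ENNReal.le_div_iff_mul_le (Or.inl hN)
          (Or.inl (natCast_ne_top N)), mul_comm]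
        exact h
    _ ≤ ENNReal.ofReal L⁻¹ * b := by
        gcongr
        rw [ENNReal.ofReal_inv_of_pos hL, ← ENNReal.ofReal_natCast]
        exact ENNReal.inv_le_inv.2 (ENNReal.ofReal_le_ofReal hLN)

theorem pow_toNat_add_two_le {δ : ℝ} (hδ : 1 ≤ δ) {m : ℤ} (hm : 0 ≤ m) :
    δ ^ (m.toNat + 2) ≤ 9 * δ ^ ((4 : ℤ) + m) := by
  rw [show (4 : ℤ) + m = ((m.toNat + 4 : ℕ) : ℤ) by omega, zpow_natCast]
  have := pow_le_pow_right₀ hδ (show m.toNat + 2 ≤ m.toNat + 4 by omega)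
  nlinarith [pow_nonneg (zero_le_one.trans hδ) (m.toNat + 4)]

theorem statement14_general (n : ℕ) (μ : Measure (EuclideanSpace ℝ (Fin n)))
    (δ : ℝ) (hδ : 1 < δ) (hdbl : DoublingWrt μ {C | IsAxisCube C} δ)
    (K : Set (EuclideanSpace ℝ (Fin n))) (hK : Convex ℝ K)
    (hKQ : K ⊆ {x | ∀ i, x i ∈ Set.Icc (0 : ℝ) 1})
    (ε : ℝ) (hε : 0 < ε) (hε1 : ε < 1) :
    μ {x | x ∉ K ∧ EMetric.infEdist x K < ENNReal.ofReal ε}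
      ≤ ENNReal.ofReal
          (9 * δ ^ ((4 : ℤ) + ⌈Real.logb 2 (34 * Real.sqrt n)⌉) *
            (Real.logb 2 (1 / ε))⁻¹) *
        μ {x | ∀ i, x i ∈ Set.Icc (0 : ℝ) 1} := by
  set L := Real.logb 2 (1 / ε)
  set m := ⌈Real.logb 2 (34 * Real.sqrt n)⌉
  have hL : 0 < L := Real.logb_pos one_lt_two (one_lt_one_div hε hε1)
  have hm : 0 ≤ m := by
    refine Int.ceil_nonneg ?_
    rcases n.eq_zero_or_pos with rfl | hn
    · simp
    · exact Real.logb_nonneg one_lt_two (by nlinarith [Real.one_le_sqrt.2 (Nat.one_le_cast.2 hn)])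
  have hk : 25 * Real.sqrt n ≤ 2 ^ m.toNat :=
    le_trans (by linarith [Real.sqrt_nonneg n]) (le_two_pow_toNat_ceil_logb (by positivity))
  have hcount := hdbl.natCast_mul_measure_thickening_diff_le hK hKQ hε hk (N := ⌊L⌋₊ + 1)
    fun j hj ↦ le_half_pow_of_le_logb hε <|
      (Nat.cast_le.2 (Nat.lt_succ_iff.1 hj)).trans (Nat.floor_le hL.le)
  calc _ ≤ μ (thickening ε K \ K) := measure_mono fun x hx ↦ ⟨hx.2, hx.1⟩
    _ ≤ ENNReal.ofReal L⁻¹ * (ENNReal.ofReal δ ^ (m.toNat + 2) * μ {x | ∀ i, x i ∈ Icc 0 1}) :=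
        ENNReal.le_ofReal_inv_mul_of_natCast_mul_le hL
          (by push_cast; exact (Nat.lt_floor_add_one L).le) hcount
    _ = ENNReal.ofReal (δ ^ (m.toNat + 2) * L⁻¹) * μ {x | ∀ i, x i ∈ Icc 0 1} := by
        rw [ENNReal.ofReal_mul (by positivity), ENNReal.ofReal_pow (by positivity)]
        ring
    _ ≤ _ := by
        gcongr
        exact pow_toNat_add_two_le hδ.le hm

/-- Lemma `l.weighted` of the paper. Let `K` be a convex subset of the
unit cube `Q = [0,1]ⁿ` and `μ` a nonzero locally finite Borel measure doubling with
constant `δ` with respect to axis-parallel cubes. Then for `0 < ε < 1`, the `μ`-measure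
of the `ε`-annulus around `K` is at most
`9·δ^{4+⌈log₂(34√n)⌉}·(log₂(1/ε))⁻¹·μ(Q)`. -/
theorem statement14 (n : ℕ) (μ : Measure (EuclideanSpace ℝ (Fin n)))
    (hloc : IsLocallyFiniteMeasure μ) (hμ : μ ≠ 0)
    (δ : ℝ) (hδ : 1 < δ) (hdbl : DoublingWrt μ {C | IsAxisCube C} δ)
    (K : Set (EuclideanSpace ℝ (Fin n))) (hK : Convex ℝ K)
    (hKQ : K ⊆ {x | ∀ i, x i ∈ Set.Icc (0 : ℝ) 1})
    (ε : ℝ) (hε : 0 < ε) (hε1 : ε < 1) :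
    μ {x | x ∉ K ∧ EMetric.infEdist x K < ENNReal.ofReal ε}
      ≤ ENNReal.ofReal
          (9 * δ ^ ((4 : ℤ) + ⌈Real.logb 2 (34 * Real.sqrt n)⌉) *
            (Real.logb 2 (1 / ε))⁻¹) *
        μ {x | ∀ i, x i ∈ Set.Icc (0 : ℝ) 1} :=
  statement14_general n μ δ hδ hdbl K hK hKQ ε hε hε1
end

section
/- Let K be a convex set contained in the unit cube Q = [0,1]ⁿ, let μ be a nonzero locally finite nonnegative Borel measure on ℝⁿ which is doubling with respect to axis-parallel cubes with constant δ_μ, and let m be a positive integer with √n·2^{−m} < 1. Let {Q_j} be the dyadic subcubes of Q of sidelength 2^{−m} that are disjoint from K. Then μ(⋃_j Q_j) + μ(K) ≥ ξ_m·μ(Q), where ξ_m = 1 − 9·δ_μ^{4 + ⌈log₂(34√n)⌉}·(log₂(2^m/√n))^{−1}; in particular ξ_m → 1 as m → ∞. -/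
open MeasureTheory Set Filter
open scoped ENNReal Topology Pointwise

open Metric Real
open scoped Function RealInnerProductSpace

/-!
Let `d = infDist · K`. A point `t` of the collar `{d ≤ ε} \ K` sits at depth `d t ≤ ε` on an outer
unit normal `ν` of `closure K` issued from a point `q`, and `y = q + (3r/2) ν` lies at distance
exactly `3r/2` from `K`. Monotonicity of the normal map, `⟪q' - q, ν' - ν⟫ ≥ 0`, makes `t ↦ y`
expanding up to an error `ε`; hence for an `r`-separated net of the collar the cubes of side
`r / (4√n)` around the points `y` are disjoint and lie in the shell `{r < d ≤ 2r}`, while doubling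
gives each of them a share `δ^(-A)` of the collar mass near its point. So the collar has measure at
most `δ^A` times that of each of the `log₂(1/ε)` disjoint dyadic shells `r = ε 2^j`, which all lie
in a fixed dilate of `Q`; this gives `μ(collar) ≤ 2 δ^(A+4) μ(Q) / log₂(1/ε)`.

A point of `Q` outside `K`, outside the collar of width `√n 2^(-m)` and off the grid hyperplanes
lies in a dyadic cube disjoint from `K`. The hyperplanes are `μ`-null: a piece of one is contained
in `closure S \ S` for a convex slab `S`, which lies in every collar of `S`.
-/

namespace ConvexCollar

section OuterNormal

variable {F : Type*} [NormedAddCommGroup F] [InnerProductSpace ℝ F]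

def IsOuterUnitNormal (C : Set F) (q ν : F) : Prop :=
  q ∈ C ∧ ‖ν‖ = 1 ∧ ∀ k ∈ C, ⟪k - q, ν⟫ ≤ 0

lemma norm_le_norm_add_of_inner_nonneg {a b : F} (h : 0 ≤ ⟪a, b⟫) : ‖a‖ ≤ ‖a + b‖ := by
  refine (sq_le_sq₀ (norm_nonneg _) (norm_nonneg _)).1 ?_
  rw [norm_add_sq_real]
  nlinarith [sq_nonneg ‖b‖]

namespace IsOuterUnitNormal

variable {C : Set F} {q ν q' ν' : F}

lemma of_ne_zero {u : F} (hq : q ∈ C) (hu : u ≠ 0) (h : ∀ k ∈ C, ⟪k - q, u⟫ ≤ 0) :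
    IsOuterUnitNormal C q (‖u‖⁻¹ • u) := by
  refine ⟨hq, norm_smul_inv_norm hu, fun k hk => ?_⟩
  rw [real_inner_smul_right]
  exact mul_nonpos_of_nonneg_of_nonpos (by positivity) (h k hk)

lemma infDist_add_smul (h : IsOuterUnitNormal C q ν) {s : ℝ} (hs : 0 ≤ s) :
    infDist (q + s • ν) C = s := by
  obtain ⟨hq, hν, hC⟩ := h
  refine le_antisymm ?_ ((le_infDist ⟨q, hq⟩).2 fun k hk => ?_)
  · simpa [dist_eq_norm, norm_smul, hν, abs_of_nonneg hs]
      using infDist_le_dist_of_mem (x := q + s • ν) hq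
  · have hinner : ⟪q + s • ν - k, ν⟫ = s - ⟪k - q, ν⟫ := by
      rw [show q + s • ν - k = s • ν - (k - q) by abel, inner_sub_left, real_inner_smul_left,
        real_inner_self_eq_norm_sq, hν]
      ring
    have := real_inner_le_norm (q + s • ν - k) ν
    rw [hinner, hν, mul_one, ← dist_eq_norm] at this
    linarith [hC k hk]

lemma inner_sub_sub_nonneg (h : IsOuterUnitNormal C q ν) (h' : IsOuterUnitNormal C q' ν') :
    0 ≤ ⟪q' - q, ν' - ν⟫ := by
  have h₁ := h.2.2 q' h'.1
  have h₂ := h'.2.2 q h.1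
  rw [← neg_sub, inner_neg_left] at h₂
  rw [inner_sub_right]
  linarith

lemma dist_le_two_mul_dist_add (h : IsOuterUnitNormal C q ν) (h' : IsOuterUnitNormal C q' ν')
    {d d' ε R : ℝ} (hd : d ∈ Icc 0 ε) (hd' : d' ∈ Icc 0 ε) (hεR : ε ≤ R) :
    dist (q + d • ν) (q' + d' • ν') ≤ 2 * dist (q + R • ν) (q' + R • ν') + ε := by
  have hR : 0 ≤ R := hd.1.trans (hd.2.trans hεR)
  have hD : dist (q + R • ν) (q' + R • ν') = ‖(q' - q) + R • (ν' - ν)‖ := by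
    rw [dist_comm, dist_eq_norm]; congr 1; module
  have hmono : 0 ≤ ⟪q' - q, R • (ν' - ν)⟫ := by
    rw [real_inner_smul_right]; exact mul_nonneg hR (h.inner_sub_sub_nonneg h')
  have hq : ‖q' - q‖ ≤ ‖(q' - q) + R • (ν' - ν)‖ := norm_le_norm_add_of_inner_nonneg hmono
  have hν : R * ‖ν' - ν‖ ≤ ‖(q' - q) + R • (ν' - ν)‖ := by
    have := norm_le_norm_add_of_inner_nonneg (a := R • (ν' - ν)) (b := q' - q)
      (by rwa [real_inner_comm])
    rwa [norm_smul, Real.norm_of_nonneg hR, add_comm] at this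
  have hdd : |d' - d| ≤ ε :=
    abs_sub_le_iff.2 ⟨by linarith [hd.1, hd'.2], by linarith [hd.2, hd'.1]⟩
  calc dist (q + d • ν) (q' + d' • ν') = ‖(q' - q) + d' • (ν' - ν) + (d' - d) • ν‖ := by
        rw [dist_comm, dist_eq_norm]; congr 1; module
    _ ≤ ‖q' - q‖ + d' * ‖ν' - ν‖ + |d' - d| := by
        refine norm_add₃_le.trans ?_
        rw [norm_smul, norm_smul, h.2.1, Real.norm_eq_abs, Real.norm_eq_abs,
          abs_of_nonneg hd'.1, mul_one]
    _ ≤ ‖q' - q‖ + R * ‖ν' - ν‖ + ε := by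
        gcongr; exact hd'.2.trans hεR
    _ ≤ 2 * dist (q + R • ν) (q' + R • ν') + ε := by rw [hD]; linarith

end IsOuterUnitNormal

variable [FiniteDimensional ℝ F] {K : Set F} {w : F}

lemma exists_isOuterUnitNormal_of_mem_closure (hK : Convex ℝ K) (hw : w ∈ closure K)
    (hwK : w ∉ K) : ∃ ν, IsOuterUnitNormal (closure K) w ν := by
  suffices ∃ u ≠ 0, ∀ k ∈ closure K, ⟪k - w, u⟫ ≤ 0 by
    obtain ⟨u, hu, h⟩ := this
    exact ⟨_, .of_ne_zero hw hu h⟩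
  by_cases hint : (interior K).Nonempty
  · obtain ⟨f, hf0, hf⟩ := geometric_hahn_banach_of_nonempty_interior_point hK
      (fun h => hwK (interior_subset h)) hint
    have hfc : ∀ k ∈ closure K, f k ≤ f w :=
      fun k hk => closure_minimal hf (isClosed_le f.continuous continuous_const) hk
    refine ⟨(InnerProductSpace.toDual ℝ F).symm f, by simpa using hf0, fun k hk => ?_⟩
    rw [real_inner_comm, InnerProductSpace.toDual_symm_apply, map_sub]
    linarith [hfc k hk]
  · rw [hK.interior_nonempty_iff_affineSpan_eq_top] at hint
    have hspan : closure K ⊆ affineSpan ℝ K :=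
      closure_minimal (subset_affineSpan ℝ K) (affineSpan ℝ K).closed_of_finiteDimensional
    have hdir : (affineSpan ℝ K).directionᗮ ≠ ⊥ := by
      rw [Ne, Submodule.orthogonal_eq_bot_iff, AffineSubspace.direction_eq_top_iff_of_nonempty
        ⟨w, hspan hw⟩]
      exact hint
    obtain ⟨u, hu, hu0⟩ := Submodule.exists_mem_ne_zero_of_ne_bot hdir
    refine ⟨u, hu0, fun k hk => le_of_eq ?_⟩
    rw [real_inner_comm]
    exact (Submodule.mem_orthogonal' _ _).1 hu _
      (AffineSubspace.vsub_mem_direction (hspan hk) (hspan hw))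

lemma exists_isOuterUnitNormal_add_smul_eq (hK : Convex ℝ K) (hKne : K.Nonempty) (hw : w ∉ K) :
    ∃ q ν, IsOuterUnitNormal (closure K) q ν ∧ q + infDist w K • ν = w := by
  by_cases hwc : w ∈ closure K
  · obtain ⟨ν, hν⟩ := exists_isOuterUnitNormal_of_mem_closure hK hwc hw
    exact ⟨w, ν, hν, by simp [infDist_zero_of_mem_closure hwc]⟩
  obtain ⟨v, hv, hvmin⟩ := exists_norm_eq_iInf_of_complete_convex hKne.closure
    isClosed_closure.isComplete hK.closure w
  have hwv : w - v ≠ 0 := sub_ne_zero.2 (ne_of_mem_of_not_mem hv hwc).symm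
  have hν := IsOuterUnitNormal.of_ne_zero hv hwv fun k hk => by
    rw [real_inner_comm]; exact (norm_eq_iInf_iff_real_inner_le_zero hK.closure hv).1 hvmin k hk
  have heq : v + ‖w - v‖ • (‖w - v‖⁻¹ • (w - v)) = w := by
    rw [smul_smul, mul_inv_cancel₀ (norm_ne_zero_iff.2 hwv), one_smul, add_sub_cancel]
  have hd : infDist w K = ‖w - v‖ := by
    rw [← infDist_closure, ← hν.infDist_add_smul (norm_nonneg _), heq]
  exact ⟨v, _, hν, by rw [hd, heq]⟩

end OuterNormal

section Metric

variable {X : Type*} [PseudoMetricSpace X]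

lemma exists_finset_separated_net {s : Set X} (hs : TotallyBounded s) {r : ℝ} (hr : 0 < r) :
    ∃ N : Finset X, ↑N ⊆ s ∧ (N : Set X).Pairwise (fun x y => r < dist x y) ∧
      s ⊆ ⋃ y ∈ N, closedBall y r := by
  lift r to NNReal using hr.le
  have hfin : packingNumber r s ≠ ⊤ := by
    obtain ⟨N, -, hNfin, hN⟩ := exists_finite_isCover_of_totallyBounded (ε := r / 2)
      (half_pos (NNReal.coe_pos.1 hr)).ne' hs
    refine ne_top_of_le_ne_top hNfin.encard_lt_top.ne ?_
    simpa [mul_div_cancel₀] using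
      (packingNumber_two_mul_le_externalCoveringNumber (r / 2) s).trans
        hN.externalCoveringNumber_le_encard
  have hNfin : (maximalSeparatedSet r s).Finite := by
    rw [← Set.encard_ne_top_iff, encard_maximalSeparatedSet hfin]; exact hfin
  refine ⟨hNfin.toFinset, by simpa using maximalSeparatedSet_subset, ?_, ?_⟩
  · intro x hx y hy hxy
    have : (r : ENNReal) < edist x y :=
      isSeparated_maximalSeparatedSet (by simpa using hx) (by simpa using hy) hxy
    rw [edist_dist, ← ENNReal.ofReal_coe_nnreal, ENNReal.ofReal_lt_ofReal_iff'] at this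
    exact this.1
  · simpa using isCover_iff_subset_iUnion_closedBall.1 (isCover_maximalSeparatedSet hfin)

lemma infDist_le_of_mem_cthickening {E : Set X} {x : X} {ε : ℝ} (hε : 0 ≤ ε)
    (h : x ∈ cthickening ε E) : infDist x E ≤ ε :=
  ENNReal.toReal_le_of_le_ofReal hε (mem_cthickening_iff.1 h)

end Metric

section Cube

variable {ι : Type*}

def cube (c : EuclideanSpace ℝ ι) (s : ℝ) : Set (EuclideanSpace ℝ ι) :=
  {x | ∀ i, |x i - c i| < s / 2}

def unitCube (ι : Type*) : Set (EuclideanSpace ℝ ι) := {x | ∀ i, x i ∈ Icc (0 : ℝ) 1}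

variable {c x y : EuclideanSpace ℝ ι} {s t : ℝ}

lemma cube_mono (h : s ≤ t) : cube c s ⊆ cube c t :=
  fun _ hx i => (hx i).trans_le (by linarith)

lemma convex_cube : Convex ℝ (cube c s) := by
  intro x hx y hy a b ha hb hab i
  have : (a • x + b • y) i - c i = a * (x i - c i) + b * (y i - c i) := by
    simp only [PiLp.add_apply, PiLp.smul_apply, smul_eq_mul]; linear_combination (c i) * hab
  rw [this]
  calc |a * (x i - c i) + b * (y i - c i)| ≤ a * |x i - c i| + b * |y i - c i| := by
        refine (abs_add_le _ _).trans_eq ?_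
        rw [abs_mul, abs_mul, abs_of_nonneg ha, abs_of_nonneg hb]
    _ ≤ a * max |x i - c i| |y i - c i| + b * max |x i - c i| |y i - c i| := by
        gcongr; exacts [le_max_left _ _, le_max_right _ _]
    _ < s / 2 := by rw [← add_mul, hab, one_mul]; exact max_lt (hx i) (hy i)

lemma cube_two_mul_eq_vadd_smul (c : EuclideanSpace ℝ ι) (s : ℝ) :
    cube c (2 * s) = -c +ᵥ (2 : ℝ) • cube c s := by
  ext x
  rw [mem_vadd_set_iff_neg_vadd_mem, neg_neg, vadd_eq_add,
    mem_smul_set_iff_inv_smul_mem₀ two_ne_zero]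
  refine forall_congr' fun i => ?_
  simp only [PiLp.smul_apply, PiLp.add_apply, smul_eq_mul]
  rw [show 2⁻¹ * (c i + x i) - c i = (x i - c i) / 2 by ring, abs_div, abs_two]
  constructor <;> intro h <;> linarith

lemma unitCube_subset_cube : unitCube ι ⊆ cube (WithLp.toLp 2 fun _ => 1 / 2) 2 :=
  fun x hx i => by
    have := hx i
    rw [PiLp.toLp_apply, abs_lt]
    constructor <;> linarith [this.1, this.2]

lemma cube_subset_unitCube : cube (WithLp.toLp 2 fun _ => 1 / 2) 1 ⊆ unitCube ι :=
  fun x hx i => by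
    have := abs_lt.1 (hx i)
    rw [PiLp.toLp_apply] at this
    constructor <;> linarith [this.1, this.2]

variable [Fintype ι]

lemma dist_le_sqrt_card_mul (hs : 0 ≤ s) (h : ∀ i, |x i - y i| ≤ s) :
    dist x y ≤ √(Fintype.card ι) * s := by
  rw [EuclideanSpace.dist_eq, ← Real.sqrt_sq hs, ← Real.sqrt_mul (Nat.cast_nonneg _)]
  gcongr
  calc ∑ i, dist (x i) (y i) ^ 2 ≤ ∑ _i : ι, s ^ 2 := by
        gcongr with i; rw [Real.dist_eq]; exact h i
    _ = _ := by simp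

lemma isOpen_cube : IsOpen (cube c s) := by
  simp only [cube, ofPred_forall]
  exact isOpen_iInter_of_finite fun i => isOpen_lt (by fun_prop) continuous_const

lemma isBounded_cube : Bornology.IsBounded (cube c s) :=
  isBounded_closedBall.subset fun _ hx => mem_closedBall.2 <|
    dist_le_sqrt_card_mul (s := |s| / 2) (by positivity)
      fun i => (hx i).le.trans (by linarith [le_abs_self s])

lemma cube_subset_closedBall (hs : 0 ≤ s) :
    cube c s ⊆ closedBall c (√(Fintype.card ι) * s / 2) := fun _ hx => by
  rw [mul_div_assoc]
  exact dist_le_sqrt_card_mul (by positivity) fun i => (hx i).le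

lemma closedBall_subset_cube (h : 2 * t < s) : closedBall c t ⊆ cube c s :=
  fun x hx i => by
    rw [← Real.dist_eq]
    exact (PiLp.dist_apply_le x c i).trans_lt (by linarith [mem_closedBall.1 hx])

lemma dist_le_of_not_disjoint_cube (hs : 0 ≤ s) (h : ¬Disjoint (cube x s) (cube y s)) :
    dist x y ≤ √(Fintype.card ι) * s := by
  obtain ⟨z, hzx, hzy⟩ := not_disjoint_iff.1 h
  refine dist_le_sqrt_card_mul hs fun i => ?_
  have := abs_sub_le (x i) (z i) (y i)
  rw [abs_sub_comm (x i) (z i)] at this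
  linarith [hzx i, hzy i]

lemma mem_cube_of_infDist_lt {K : Set (EuclideanSpace ℝ ι)} (hKc : K ⊆ cube c s)
    (hKne : K.Nonempty) {z : EuclideanSpace ℝ ι} (hz : infDist z K < t) :
    z ∈ cube c (s + 2 * t) := by
  obtain ⟨k, hk, hzk⟩ := (infDist_lt_iff hKne).1 hz
  intro i
  have hzk_i : |z i - k i| ≤ dist z k := by
    rw [← Real.dist_eq]; exact PiLp.dist_apply_le z k i
  linarith [abs_sub_le (z i) (k i) (c i), hKc hk i]

namespace IsOuterUnitNormal

variable {K : Set (EuclideanSpace ℝ ι)} {q ν q' ν' : EuclideanSpace ℝ ι} {r : ℝ}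

lemma cube_subset_shell (h : IsOuterUnitNormal (closure K) q ν) (hr : 0 < r) (hs : 0 ≤ s)
    (hrs : √(Fintype.card ι) * s ≤ r / 4) :
    cube (q + (3 / 2 * r) • ν) s ⊆ (infDist · K) ⁻¹' Ioc r (2 * r) := by
  intro z hz
  have hzy := mem_closedBall.1 (cube_subset_closedBall hs hz)
  have hy : infDist (q + (3 / 2 * r) • ν) K = 3 / 2 * r := by
    rw [← infDist_closure]; exact h.infDist_add_smul (by positivity)
  have h₁ := infDist_le_infDist_add_dist (s := K) (x := z) (y := q + (3 / 2 * r) • ν)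
  have h₂ := infDist_le_infDist_add_dist (s := K) (x := q + (3 / 2 * r) • ν) (y := z)
  rw [dist_comm] at h₂
  constructor <;> linarith

lemma disjoint_cube (h : IsOuterUnitNormal (closure K) q ν)
    (h' : IsOuterUnitNormal (closure K) q' ν') {d d' ε : ℝ} (hd : d ∈ Icc 0 ε)
    (hd' : d' ∈ Icc 0 ε) (hεr : 2 * ε ≤ r) (hs : 0 ≤ s) (hrs : √(Fintype.card ι) * s ≤ r / 4)
    (hsep : r < dist (q + d • ν) (q' + d' • ν')) :
    Disjoint (cube (q + (3 / 2 * r) • ν) s) (cube (q' + (3 / 2 * r) • ν') s) := by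
  by_contra hcap
  have := h.dist_le_two_mul_dist_add h' hd hd' (by linarith [hd.1, hd.2] : ε ≤ 3 / 2 * r)
  linarith [dist_le_of_not_disjoint_cube hs hcap]

end IsOuterUnitNormal

end Cube

section Doubling

variable {n : ℕ} {μ : Measure (EuclideanSpace ℝ (Fin n))} {δ : ℝ}

lemma isAxisCube_cube (c : EuclideanSpace ℝ (Fin n)) {s : ℝ} (hs : 0 < s) :
    IsAxisCube (cube c s) := by
  refine ⟨fun i => c i - s / 2, s, hs, ?_⟩
  ext x
  simp only [cube, mem_ofPred_eq, mem_Ioo, abs_lt]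
  exact forall_congr' fun i => by
    constructor <;> intro h <;> constructor <;> linarith [h.1, h.2]

lemma measure_cube_pow_mul_le (hdbl : DoublingWrt μ {C | IsAxisCube C} δ)
    (c : EuclideanSpace ℝ (Fin n)) {s : ℝ} (hs : 0 < s) (k : ℕ) :
    μ (cube c (2 ^ k * s)) ≤ ENNReal.ofReal δ ^ k * μ (cube c s) := by
  induction k with
  | zero => simp
  | succ k ih =>
    have hpos : 0 < 2 ^ k * s := by positivity
    have hdbl₁ := hdbl _ (isAxisCube_cube c hpos) (-c)
      (by rw [← cube_two_mul_eq_vadd_smul]; exact cube_mono (by linarith))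
    rw [← cube_two_mul_eq_vadd_smul] at hdbl₁
    calc μ (cube c (2 ^ (k + 1) * s)) = μ (cube c (2 * (2 ^ k * s))) := by ring_nf
      _ ≤ ENNReal.ofReal δ * (ENNReal.ofReal δ ^ k * μ (cube c s)) := hdbl₁.trans (by gcongr)
      _ = ENNReal.ofReal δ ^ (k + 1) * μ (cube c s) := by ring

variable [NeZero n] {K : Set (EuclideanSpace ℝ (Fin n))}

theorem measure_collar_le_measure_shell (hdbl : DoublingWrt μ {C | IsAxisCube C} δ)
    (hK : Convex ℝ K) (hKb : Bornology.IsBounded K) {ε r : ℝ} (hε : 0 < ε) (hr : 2 * ε ≤ r)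
    {A : ℕ} (hA : 20 * √n < 2 ^ A) :
    μ (cthickening ε K \ K) ≤ ENNReal.ofReal δ ^ A * μ ((infDist · K) ⁻¹' Ioc r (2 * r)) := by
  set W := cthickening ε K \ K
  rcases K.eq_empty_or_nonempty with rfl | hKne
  · simp [W]
  have hr0 : 0 < r := by linarith
  have hn : 0 < √n := Real.sqrt_pos.2 (Nat.cast_pos.2 (NeZero.pos n))
  set s := r / (4 * √n)
  have hs : 0 < s := by positivity
  have hns : √(Fintype.card (Fin n)) * s = r / 4 := by
    simp only [s, Fintype.card_fin]; field_simp
  choose! q ν hqν heq using fun t (ht : t ∈ W) =>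
    exists_isOuterUnitNormal_add_smul_eq hK hKne ht.2
  have hdepth : ∀ t ∈ W, infDist t K ∈ Icc 0 ε :=
    fun t ht => ⟨infDist_nonneg, infDist_le_of_mem_cthickening hε.le ht.1⟩
  set y := fun t => q t + (3 / 2 * r) • ν t
  obtain ⟨T, hTW, hTsep, hTcov⟩ := exists_finset_separated_net
    ((hKb.cthickening.subset sdiff_subset).isCompact_closure.totallyBounded.subset
      subset_closure) hr0
  have hdisj : (T : Set _).PairwiseDisjoint fun t => cube (y t) s := fun t ht t' ht' htt' =>
    (hqν t (hTW ht)).disjoint_cube (hqν t' (hTW ht')) (hdepth t (hTW ht)) (hdepth t' (hTW ht'))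
      hr hs.le hns.le (by rw [heq t (hTW ht), heq t' (hTW ht')]; exact hTsep ht ht' htt')
  have hcover : ∀ t ∈ W, W ∩ closedBall t r ⊆ cube (y t) (2 ^ A * s) := by
    intro t ht z hz
    have hty : dist t (y t) ≤ 3 / 2 * r :=
      calc dist t (y t) = dist (q t + infDist t K • ν t) (q t + (3 / 2 * r) • ν t) := by
            rw [heq t ht]
        _ = |infDist t K - 3 / 2 * r| := by
            rw [dist_add_left, dist_eq_norm, ← sub_smul, norm_smul, (hqν t ht).2.1, mul_one,
              Real.norm_eq_abs]
        _ ≤ 3 / 2 * r := abs_le.2 ⟨by linarith [(hdepth t ht).1], by linarith [(hdepth t ht).2]⟩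
    refine closedBall_subset_cube (t := 5 / 2 * r) ?_ <|
      mem_closedBall.2 ((dist_triangle z t (y t)).trans (by linarith [mem_closedBall.1 hz.2]))
    calc 2 * (5 / 2 * r) = 20 * (√n * s) := by
          rw [← Fintype.card_fin n, hns]; ring
      _ < 2 ^ A * s := by rw [← mul_assoc]; gcongr
  calc μ W ≤ μ (⋃ t ∈ T, W ∩ closedBall t r) := measure_mono fun z hz => by
        obtain ⟨t, ht, hzt⟩ := mem_iUnion₂.1 (hTcov hz)
        exact mem_iUnion₂.2 ⟨t, ht, hz, hzt⟩
    _ ≤ ∑ t ∈ T, μ (W ∩ closedBall t r) := measure_biUnion_finset_le _ _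
    _ ≤ ∑ t ∈ T, ENNReal.ofReal δ ^ A * μ (cube (y t) s) := Finset.sum_le_sum fun t ht =>
        (measure_mono (hcover t (hTW ht))).trans (measure_cube_pow_mul_le hdbl _ hs A)
    _ = ENNReal.ofReal δ ^ A * μ (⋃ t ∈ T, cube (y t) s) := by
        rw [measure_biUnion_finset hdisj fun _ _ => isOpen_cube.measurableSet, Finset.mul_sum]
    _ ≤ _ := by
        gcongr
        exact iUnion₂_subset fun t ht =>
          (hqν t (hTW ht)).cube_subset_shell hr0 hs.le hns.le

theorem natCast_mul_measure_collar_le (hdbl : DoublingWrt μ {C | IsAxisCube C} δ)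
    (hK : Convex ℝ K) {c : EuclideanSpace ℝ (Fin n)} {s : ℝ} (hKc : K ⊆ cube c s) {ε : ℝ}
    (hε : 0 < ε) {M : ℕ} (hM : ε * 2 ^ M ≤ s) {A : ℕ} (hA : 20 * √n < 2 ^ A) :
    M * μ (cthickening ε K \ K) ≤ ENNReal.ofReal δ ^ A * μ (cube c (8 * s)) := by
  set f : ℕ → ℝ := fun j => ε * 2 ^ (j + 1)
  set shell := fun j => (infDist · K) ⁻¹' Ioc (f j) (f (j + 1))
  have hshell (j : ℕ) : μ (cthickening ε K \ K) ≤ ENNReal.ofReal δ ^ A * μ (shell j) := by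
    have h2j : (2 : ℝ) ≤ 2 ^ (j + 1) := le_self_pow₀ one_le_two j.succ_ne_zero
    have h := measure_collar_le_measure_shell hdbl hK (isBounded_cube.subset hKc) hε
      (r := f j) (by simp only [f]; nlinarith) hA
    rwa [show 2 * f j = f (j + 1) by simp only [f]; ring] at h
  have hmono : Monotone f := fun i j hij => by simp only [f]; gcongr; norm_num
  have hdisj : Pairwise (Disjoint on shell) := fun i j hij =>
    (hmono.pairwise_disjoint_on_Ioc_succ hij).preimage _
  have hsub : ∀ j ∈ Finset.range M, shell j ⊆ cube c (8 * s) := by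
    intro j hj z hz
    have hKne : K.Nonempty := nonempty_iff_ne_empty.2 fun h => by
      simp only [shell, mem_preimage, h, infDist_empty, mem_Ioc] at hz
      exact (hz.1.trans' (by positivity)).false
    have hs : 0 < s := (by positivity : 0 < ε * 2 ^ M).trans_le hM
    have hfs : f (j + 1) ≤ 2 * s :=
      calc f (j + 1) = ε * 2 ^ (j + 2) := rfl
        _ ≤ ε * 2 ^ (M + 1) := by
            have := Finset.mem_range.1 hj
            gcongr ε * ?_
            exact pow_le_pow_right₀ one_le_two (by omega)
        _ ≤ 2 * s := by rw [pow_succ]; linarith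
    exact cube_mono (by linarith)
      (mem_cube_of_infDist_lt hKc hKne (t := 7 / 2 * s) (hz.2.trans_lt (by linarith)))
  calc (M : ℝ≥0∞) * μ (cthickening ε K \ K)
      = ∑ _j ∈ Finset.range M, μ (cthickening ε K \ K) := by simp
    _ ≤ ∑ j ∈ Finset.range M, ENNReal.ofReal δ ^ A * μ (shell j) :=
        Finset.sum_le_sum fun j _ => hshell j
    _ = ENNReal.ofReal δ ^ A * μ (⋃ j ∈ Finset.range M, shell j) := by
        rw [measure_biUnion_finset (hdisj.set_pairwise _) fun j _ =>
          measurableSet_Ioc.preimage (continuous_infDist_pt K).measurable, Finset.mul_sum]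
    _ ≤ _ := by gcongr; exact iUnion₂_subset hsub

end Doubling

section ENNReal

lemma eq_zero_of_forall_natCast_mul_le {a C : ℝ≥0∞} (hC : C ≠ ⊤)
    (h : ∀ N : ℕ, (N : ℝ≥0∞) * a ≤ C) : a = 0 := by
  by_contra ha
  obtain ⟨N, hN⟩ := ENNReal.exists_nat_gt (ENNReal.div_lt_top hC ha).ne
  exact (ENNReal.div_lt_iff (Or.inl ha) (Or.inr hC) |>.1 hN).not_ge (h N)

lemma le_ofReal_two_div_mul_of_natFloor {a b : ℝ≥0∞} {L : ℝ} (hL : 1 ≤ L)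
    (h : (⌊L⌋₊ : ℝ≥0∞) * a ≤ b) : a ≤ ENNReal.ofReal (2 / L) * b := by
  set M := ⌊L⌋₊
  have hM : 1 ≤ M := Nat.le_floor (by simpa using hL)
  have hM' : (1 : ℝ) ≤ M := Nat.one_le_cast.2 hM
  have hLM : L ≤ 2 * M := by linarith [Nat.lt_floor_add_one L]
  have hM0 : (M : ℝ≥0∞) ≠ 0 := Nat.cast_ne_zero.2 (by omega)
  calc a ≤ b / M :=
        (ENNReal.le_div_iff_mul_le (Or.inl hM0) (Or.inl (ENNReal.natCast_ne_top M))).2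
          (by rwa [mul_comm])
    _ = ENNReal.ofReal (1 / M) * b := by
        rw [one_div, ENNReal.div_eq_inv_mul, ENNReal.ofReal_inv_of_pos (by positivity),
          ENNReal.ofReal_natCast]
    _ ≤ ENNReal.ofReal (2 / L) * b := by
        gcongr ENNReal.ofReal ?_ * _
        rw [div_le_div_iff₀ (by positivity) (by linarith)]
        linarith

lemma ofReal_mul_le_of_le_add {a b c : ℝ≥0∞} {x : ℝ} (ha : a ≠ ⊤) (hx : x ≤ 1) (h : a ≤ b + c)
    (hc : 0 < x → c ≤ ENNReal.ofReal (1 - x) * a) : ENNReal.ofReal x * a ≤ b := by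
  rcases le_or_gt x 0 with hx0 | hx0
  · simp [ENNReal.ofReal_of_nonpos hx0]
  refine (ENNReal.add_le_add_iff_right
    (ENNReal.mul_ne_top (ENNReal.ofReal_ne_top (r := 1 - x)) ha)).1 ?_
  calc ENNReal.ofReal x * a + ENNReal.ofReal (1 - x) * a = a := by
        rw [← add_mul, ← ENNReal.ofReal_add hx0.le (by linarith), add_sub_cancel,
          ENNReal.ofReal_one, one_mul]
    _ ≤ b + c := h
    _ ≤ b + ENNReal.ofReal (1 - x) * a := by gcongr; exact hc hx0

end ENNReal

section NullSets

variable {n : ℕ} {μ : Measure (EuclideanSpace ℝ (Fin n))} [IsLocallyFiniteMeasure μ] {δ : ℝ}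

theorem measure_closure_diff_eq_zero [NeZero n] (hdbl : DoublingWrt μ {C | IsAxisCube C} δ)
    {K : Set (EuclideanSpace ℝ (Fin n))} (hK : Convex ℝ K) {c : EuclideanSpace ℝ (Fin n)}
    {s : ℝ} (hs : 0 < s) (hKc : K ⊆ cube c s) : μ (closure K \ K) = 0 := by
  obtain ⟨A, hA⟩ := pow_unbounded_of_one_lt (20 * √n) one_lt_two
  refine eq_zero_of_forall_natCast_mul_le (C := ENNReal.ofReal δ ^ A * μ (cube c (8 * s)))
    (ENNReal.mul_ne_top (by simp) (isBounded_cube (c := c) (s := 8 * s)).measure_lt_top.ne)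
    fun M => ?_
  calc (M : ℝ≥0∞) * μ (closure K \ K) ≤ M * μ (cthickening (s / 2 ^ M) K \ K) := by
        gcongr; exact closure_subset_cthickening _ _
    _ ≤ _ := natCast_mul_measure_collar_le hdbl hK hKc (by positivity)
        (by rw [div_mul_cancel₀ _ (by positivity)]) hA

theorem measure_setOf_apply_eq_zero (hdbl : DoublingWrt μ {C | IsAxisCube C} δ) (i : Fin n)
    (a : ℝ) : μ {x | x i = a} = 0 := by
  have : NeZero n := .of_pos i.pos
  set slab := fun k : ℕ => cube (0 : EuclideanSpace ℝ (Fin n)) (k + 1) ∩ {x | x i < a}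
  refine measure_mono_null (t := ⋃ k, closure (slab k) \ slab k) ?_ <| measure_iUnion_null
    fun k => measure_closure_diff_eq_zero hdbl
      (convex_cube.inter (convex_halfSpace_lt (EuclideanSpace.projₗ i).isLinear a))
      (by positivity) inter_subset_left
  intro x hx
  obtain ⟨k, hk⟩ := exists_nat_gt (2 * ‖x‖)
  have hxk : x ∈ cube 0 (k + 1) := fun j => by
    simpa using (PiLp.norm_apply_le x j).trans_lt (by linarith)
  have htend : Tendsto (fun t : ℝ => x - t • EuclideanSpace.single i 1) (𝓝[>] 0) (𝓝 x) :=
    ((continuous_const.sub (continuous_id.smul continuous_const)).tendsto' 0 x (by simp))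
      |>.mono_left nhdsWithin_le_nhds
  refine mem_iUnion.2 ⟨k, mem_closure_of_tendsto htend ?_, fun h => h.2.ne hx⟩
  filter_upwards [htend (isOpen_cube.mem_nhds hxk), self_mem_nhdsWithin]
    with t ht (htpos : 0 < t)
  refine ⟨ht, ?_⟩
  simpa [show x i = a from hx] using htpos

end NullSets

section Dyadic

variable {ι : Type*}

def dyadicCube (m : ℕ) (j : ι → ℤ) : Set (EuclideanSpace ℝ ι) :=
  {x | ∀ i, (j i : ℝ) * 2 ^ (-(m : ℤ)) < x i ∧ x i < ((j i : ℝ) + 1) * 2 ^ (-(m : ℤ))}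

lemma exists_mem_dyadicCube {x : EuclideanSpace ℝ ι} (hx : x ∈ unitCube ι) (m : ℕ)
    (hgrid : ∀ i (k : ℤ), x i ≠ k * 2 ^ (-(m : ℤ))) :
    ∃ j : ι → ℤ, (∀ i, 0 ≤ j i ∧ j i < 2 ^ m) ∧ x ∈ dyadicCube m j := by
  have hh : (0 : ℝ) < 2 ^ (-(m : ℤ)) := by positivity
  have hint : ∀ i (k : ℤ), x i / 2 ^ (-(m : ℤ)) ≠ k :=
    fun i k hk => hgrid i k (by rw [← hk, div_mul_cancel₀ _ hh.ne'])
  refine ⟨fun i => ⌊x i / 2 ^ (-(m : ℤ))⌋, fun i => ⟨Int.floor_nonneg.2 (by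
    have := (hx i).1; positivity), Int.floor_lt.2 ?_⟩, fun i => ?_⟩
  · have hle : x i / 2 ^ (-(m : ℤ)) ≤ 2 ^ m := by
      rw [div_le_iff₀ hh, ← zpow_natCast, ← zpow_add₀ two_ne_zero, add_neg_cancel, zpow_zero]
      exact (hx i).2
    push_cast
    exact hle.lt_of_ne (by simpa using hint i ((2 : ℤ) ^ m))
  · have hfl := (Int.floor_le (x i / 2 ^ (-(m : ℤ)))).lt_of_ne (hint i _).symm
    have hlt := Int.lt_floor_add_one (x i / 2 ^ (-(m : ℤ)))
    exact ⟨(lt_div_iff₀ hh).1 hfl, (div_lt_iff₀ hh).1 hlt⟩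

variable [Fintype ι]

lemma dist_le_of_mem_dyadicCube {m : ℕ} {j : ι → ℤ} {x z : EuclideanSpace ℝ ι}
    (hx : x ∈ dyadicCube m j) (hz : z ∈ dyadicCube m j) :
    dist x z ≤ √(Fintype.card ι) * 2 ^ (-(m : ℤ)) :=
  dist_le_sqrt_card_mul (by positivity) fun i => abs_sub_le_iff.2
    ⟨by linarith [(hx i).2, (hz i).1], by linarith [(hx i).1, (hz i).2]⟩

theorem unitCube_subset_union (K : Set (EuclideanSpace ℝ ι)) (m : ℕ) :
    unitCube ι ⊆ (⋃ (j : ι → ℤ) (_ : ∀ i, 0 ≤ j i ∧ j i < 2 ^ m)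
        (_ : Disjoint (dyadicCube m j) K), dyadicCube m j) ∪ K ∪
      (cthickening (√(Fintype.card ι) * 2 ^ (-(m : ℤ))) K \ K) ∪
      ⋃ (i : ι) (k : ℤ), {x | x i = k * 2 ^ (-(m : ℤ))} := by
  intro x hx
  by_cases hgrid : ∃ i, ∃ k : ℤ, x i = k * 2 ^ (-(m : ℤ))
  · obtain ⟨i, k, hk⟩ := hgrid
    exact Or.inr (mem_iUnion₂.2 ⟨i, k, hk⟩)
  by_cases hK : x ∈ K
  · exact Or.inl (Or.inl (Or.inr hK))
  by_cases hW : x ∈ cthickening (√(Fintype.card ι) * 2 ^ (-(m : ℤ))) K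
  · exact Or.inl (Or.inr ⟨hW, hK⟩)
  simp only [not_exists] at hgrid
  obtain ⟨j, hj, hxj⟩ := exists_mem_dyadicCube hx m hgrid
  refine Or.inl (Or.inl (Or.inl (mem_iUnion₂.2 ⟨j, hj, mem_iUnion.2 ⟨?_, hxj⟩⟩)))
  exact disjoint_left.2 fun z hz hzK =>
    hW (mem_cthickening_of_dist_le x z _ K hzK (dist_le_of_mem_dyadicCube hxj hz))

theorem measure_unitCube_le {μ : Measure (EuclideanSpace ℝ ι)}
    (hnull : ∀ i (a : ℝ), μ {x | x i = a} = 0) (K : Set (EuclideanSpace ℝ ι)) (m : ℕ) :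
    μ (unitCube ι) ≤ μ (⋃ (j : ι → ℤ) (_ : ∀ i, 0 ≤ j i ∧ j i < 2 ^ m)
        (_ : Disjoint (dyadicCube m j) K), dyadicCube m j) + μ K +
      μ (cthickening (√(Fintype.card ι) * 2 ^ (-(m : ℤ))) K \ K) := by
  set U := ⋃ (j : ι → ℤ) (_ : ∀ i, 0 ≤ j i ∧ j i < 2 ^ m) (_ : Disjoint (dyadicCube m j) K),
    dyadicCube m j
  set W := cthickening (√(Fintype.card ι) * 2 ^ (-(m : ℤ))) K \ K
  set G := ⋃ (i : ι) (k : ℤ), {x : EuclideanSpace ℝ ι | x i = k * 2 ^ (-(m : ℤ))}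
  have hG : μ G = 0 := measure_iUnion_null fun i => measure_iUnion_null fun k => hnull i _
  calc μ (unitCube ι) ≤ μ (U ∪ K ∪ W ∪ G) := measure_mono (unitCube_subset_union K m)
    _ ≤ μ (U ∪ K ∪ W) + μ G := measure_union_le _ _
    _ ≤ μ (U ∪ K) + μ W := by rw [hG, add_zero]; exact measure_union_le _ _
    _ ≤ μ U + μ K + μ W := by gcongr; exact measure_union_le _ _

end Dyadic

theorem measure_collar_le_measure_unitCube {n : ℕ} [NeZero n]
    {μ : Measure (EuclideanSpace ℝ (Fin n))} {δ : ℝ} (hδ : 0 ≤ δ)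
    (hdbl : DoublingWrt μ {C | IsAxisCube C} δ) {K : Set (EuclideanSpace ℝ (Fin n))}
    (hK : Convex ℝ K) (hKQ : K ⊆ unitCube (Fin n)) {ε : ℝ} (hε : 0 < ε)
    (hL : 1 ≤ logb 2 ε⁻¹) {A : ℕ} (hA : 20 * √n < 2 ^ A) :
    μ (cthickening ε K \ K) ≤
      ENNReal.ofReal (2 * δ ^ (A + 4) / logb 2 ε⁻¹) * μ (unitCube (Fin n)) := by
  set c : EuclideanSpace ℝ (Fin n) := WithLp.toLp 2 fun _ => 1 / 2
  have hM : ε * 2 ^ ⌊logb 2 ε⁻¹⌋₊ ≤ 2 := by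
    have : (2 : ℝ) ^ ⌊logb 2 ε⁻¹⌋₊ ≤ ε⁻¹ :=
      calc (2 : ℝ) ^ ⌊logb 2 ε⁻¹⌋₊ = 2 ^ (⌊logb 2 ε⁻¹⌋₊ : ℝ) := (Real.rpow_natCast 2 _).symm
        _ ≤ 2 ^ logb 2 ε⁻¹ := Real.rpow_le_rpow_of_exponent_le one_le_two
            (Nat.floor_le (by linarith))
        _ = ε⁻¹ := Real.rpow_logb two_pos (by norm_num) (by positivity)
    calc ε * 2 ^ ⌊logb 2 ε⁻¹⌋₊ ≤ ε * ε⁻¹ := by gcongr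
      _ ≤ 2 := by rw [mul_inv_cancel₀ hε.ne']; norm_num
  have hcore := natCast_mul_measure_collar_le hdbl hK (hKQ.trans unitCube_subset_cube) hε hM hA
  have hcube : ENNReal.ofReal δ ^ A * μ (cube c (8 * 2)) ≤
      ENNReal.ofReal δ ^ (A + 4) * μ (unitCube (Fin n)) :=
    calc ENNReal.ofReal δ ^ A * μ (cube c (8 * 2))
        = ENNReal.ofReal δ ^ A * μ (cube c (2 ^ 4 * 1)) := by norm_num
      _ ≤ ENNReal.ofReal δ ^ A * (ENNReal.ofReal δ ^ 4 * μ (cube c 1)) := by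
          gcongr; exact measure_cube_pow_mul_le hdbl c one_pos 4
      _ ≤ ENNReal.ofReal δ ^ (A + 4) * μ (unitCube (Fin n)) := by
          rw [pow_add, mul_assoc]; gcongr; exact cube_subset_unitCube
  calc μ (cthickening ε K \ K)
      ≤ ENNReal.ofReal (2 / logb 2 ε⁻¹) *
          (ENNReal.ofReal δ ^ (A + 4) * μ (unitCube (Fin n))) :=
        le_ofReal_two_div_mul_of_natFloor hL (hcore.trans hcube)
    _ = _ := by
        rw [← mul_assoc, ← ENNReal.ofReal_pow hδ, ← ENNReal.ofReal_mul
          (div_nonneg zero_le_two (by linarith)), mul_div_right_comm]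

lemma tendsto_one_sub_mul_inv_logb_two_pow_div (C a : ℝ) :
    Tendsto (fun j : ℕ => 1 - C * (logb 2 (2 ^ j / a))⁻¹) atTop (𝓝 1) := by
  rcases eq_or_ne a 0 with rfl | ha
  · simp
  have hlog : Tendsto (fun j : ℕ => logb 2 (2 ^ j / a)) atTop atTop := by
    have h : ∀ j : ℕ, logb 2 (2 ^ j / a) = j + -logb 2 a := fun j => by
      rw [Real.logb_div (by positivity) ha, Real.logb_pow, Real.logb_self_eq_one one_lt_two,
        mul_one, sub_eq_add_neg]
    simpa only [h] using tendsto_atTop_add_const_right _ _ tendsto_natCast_atTop_atTop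
  simpa using (hlog.inv_tendsto_atTop.const_mul C).const_sub 1

lemma exists_natCast_eq_ceil_logb {x : ℝ} (hx : 1 ≤ x) :
    ∃ A : ℕ, x ≤ 2 ^ A ∧ (A : ℤ) = ⌈logb 2 x⌉ := by
  have h0 : 0 ≤ ⌈logb 2 x⌉ := Int.ceil_nonneg (Real.logb_nonneg one_lt_two hx)
  refine ⟨⌈logb 2 x⌉.toNat, ?_, Int.toNat_of_nonneg h0⟩
  calc x = 2 ^ logb 2 x := (Real.rpow_logb two_pos (by norm_num) (by linarith)).symm
    _ ≤ 2 ^ (⌈logb 2 x⌉.toNat : ℝ) := Real.rpow_le_rpow_of_exponent_le one_le_two (by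
        have := Int.le_ceil (logb 2 x)
        rw [← Int.toNat_of_nonneg h0] at this
        exact_mod_cast this)
    _ = 2 ^ ⌈logb 2 x⌉.toNat := Real.rpow_natCast 2 _

end ConvexCollar

open ConvexCollar

theorem statement15_general (n : ℕ) (μ : Measure (EuclideanSpace ℝ (Fin n)))
    (hloc : IsLocallyFiniteMeasure μ)
    (δ : ℝ) (hδ : 1 < δ) (hdbl : DoublingWrt μ {C | IsAxisCube C} δ)
    (K : Set (EuclideanSpace ℝ (Fin n))) (hK : Convex ℝ K)
    (hKQ : K ⊆ {x | ∀ i, x i ∈ Set.Icc (0 : ℝ) 1})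
    (m : ℕ) (hsmall : Real.sqrt n * (2 : ℝ) ^ (-(m : ℤ)) < 1)
    (ξ : ℕ → ℝ)
    (hξ : ∀ j : ℕ, ξ j =
      1 - 9 * δ ^ ((4 : ℤ) + ⌈Real.logb 2 (34 * Real.sqrt n)⌉) *
        (Real.logb 2 ((2 : ℝ) ^ j / Real.sqrt n))⁻¹) :
    ENNReal.ofReal (ξ m) * μ {x | ∀ i, x i ∈ Set.Icc (0 : ℝ) 1}
      ≤ μ (⋃ (j : Fin n → ℤ) (_ : ∀ i, 0 ≤ j i ∧ j i < 2 ^ m)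
            (_ : Disjoint
              {x : EuclideanSpace ℝ (Fin n) |
                ∀ i, (j i : ℝ) * 2 ^ (-(m : ℤ)) < x i ∧
                  x i < ((j i : ℝ) + 1) * 2 ^ (-(m : ℤ))} K),
            {x : EuclideanSpace ℝ (Fin n) |
              ∀ i, (j i : ℝ) * 2 ^ (-(m : ℤ)) < x i ∧
                x i < ((j i : ℝ) + 1) * 2 ^ (-(m : ℤ))}) + μ K ∧
    Tendsto ξ atTop (𝓝 1) := by
  refine ⟨?_, funext hξ ▸ tendsto_one_sub_mul_inv_logb_two_pow_div _ _⟩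
  have hcover := measure_unitCube_le (measure_setOf_apply_eq_zero hdbl) K m
  rw [Fintype.card_fin] at hcover
  have hQ : μ (unitCube (Fin n)) ≠ ⊤ :=
    (isBounded_cube.subset unitCube_subset_cube).measure_lt_top.ne
  rcases n.eq_zero_or_pos with rfl | hn
  · exact ofReal_mul_le_of_le_add hQ (by simp [hξ]) hcover fun _ => by simp
  have : NeZero n := .of_pos hn
  set ε := √n * 2 ^ (-(m : ℤ))
  have hε : 0 < ε := mul_pos (Real.sqrt_pos.2 (by exact_mod_cast hn)) (by positivity)
  obtain ⟨A, hA, hAeq⟩ := exists_natCast_eq_ceil_logb (x := 34 * √n)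
    (by linarith [Real.one_le_sqrt.2 (Nat.one_le_cast.2 hn : (1 : ℝ) ≤ n)])
  have hL : 0 < logb 2 ε⁻¹ := Real.logb_pos one_lt_two ((one_lt_inv₀ hε).2 hsmall)
  have h1ξ : 1 - ξ m = 9 * δ ^ (A + 4) * (logb 2 ε⁻¹)⁻¹ := by
    rw [hξ, ← hAeq, show (4 : ℤ) + A = ((A + 4 : ℕ) : ℤ) by push_cast; ring, zpow_natCast]
    simp [ε, zpow_neg, div_eq_mul_inv, mul_comm]
  have hδA : 1 ≤ δ ^ (A + 4) := one_le_pow₀ hδ.le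
  refine ofReal_mul_le_of_le_add hQ (by rw [← sub_nonneg, h1ξ]; positivity) hcover fun hξ0 => ?_
  have hL9 : 9 ≤ logb 2 ε⁻¹ := by
    rw [← sub_lt_self_iff, h1ξ, mul_inv_lt_iff₀ hL] at hξ0
    nlinarith
  calc μ (cthickening ε K \ K)
      ≤ ENNReal.ofReal (2 * δ ^ (A + 4) / logb 2 ε⁻¹) * μ (unitCube (Fin n)) :=
        measure_collar_le_measure_unitCube (by linarith) hdbl hK hKQ hε (by linarith)
          (by nlinarith [Real.sqrt_pos.2 (Nat.cast_pos.2 hn)])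
    _ ≤ ENNReal.ofReal (1 - ξ m) * μ (unitCube (Fin n)) := by
        rw [h1ξ, div_eq_mul_inv]; gcongr; norm_num

/-- Corollary to Lemma `l.weighted` of the paper. Let `K` be a convex
subset of the unit cube `Q = [0,1]ⁿ`, `μ` doubling with constant `δ` with respect to
axis-parallel cubes, and let `m ≥ 1` with `√n·2^{-m} < 1`. If `U` is the union of the
dyadic subcubes of `Q` of sidelength `2^{-m}` which are disjoint from `K`, then
`μ(U) + μ(K) ≥ ξ_m·μ(Q)` with
`ξ_m = 1 - 9·δ^{4+⌈log₂(34√n)⌉}·(log₂(2^m/√n))⁻¹`; moreover `ξ_m → 1` as `m → ∞`. -/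
theorem statement15 (n : ℕ) (μ : Measure (EuclideanSpace ℝ (Fin n)))
    (hloc : IsLocallyFiniteMeasure μ) (hμ : μ ≠ 0)
    (δ : ℝ) (hδ : 1 < δ) (hdbl : DoublingWrt μ {C | IsAxisCube C} δ)
    (K : Set (EuclideanSpace ℝ (Fin n))) (hK : Convex ℝ K)
    (hKQ : K ⊆ {x | ∀ i, x i ∈ Set.Icc (0 : ℝ) 1})
    (m : ℕ) (hm : 0 < m) (hsmall : Real.sqrt n * (2 : ℝ) ^ (-(m : ℤ)) < 1)
    (ξ : ℕ → ℝ)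
    (hξ : ∀ j : ℕ, ξ j =
      1 - 9 * δ ^ ((4 : ℤ) + ⌈Real.logb 2 (34 * Real.sqrt n)⌉) *
        (Real.logb 2 ((2 : ℝ) ^ j / Real.sqrt n))⁻¹) :
    ENNReal.ofReal (ξ m) * μ {x | ∀ i, x i ∈ Set.Icc (0 : ℝ) 1}
      ≤ μ (⋃ (j : Fin n → ℤ) (_ : ∀ i, 0 ≤ j i ∧ j i < 2 ^ m)
            (_ : Disjoint
              {x : EuclideanSpace ℝ (Fin n) |
                ∀ i, (j i : ℝ) * 2 ^ (-(m : ℤ)) < x i ∧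
                  x i < ((j i : ℝ) + 1) * 2 ^ (-(m : ℤ))} K),
            {x : EuclideanSpace ℝ (Fin n) |
              ∀ i, (j i : ℝ) * 2 ^ (-(m : ℤ)) < x i ∧
                x i < ((j i : ℝ) + 1) * 2 ^ (-(m : ℤ))}) + μ K ∧
    Tendsto ξ atTop (𝓝 1) :=
  statement15_general n μ hloc δ hδ hdbl K hK hKQ m hsmall ξ hξ
end

section
/- Let 𝔅 be a homothecy invariant basis of nonempty bounded open convex subsets of ℝⁿ, and suppose that to each B ∈ 𝔅 is associated a rectangle R_B such that B ⊆ R_B ⊆ h_B(B), where h_B is a homothety of ratio n^{3/2} centered at a point of B, and such that 𝔊 = {R_B : B ∈ 𝔅} is homothecy invariant. Suppose μ is a nonzero locally finite nonnegative Borel measure doubling with respect to 𝔅 with constant Δ_μ, and set c_n = Δ_μ^{⌈(3/2)·log₂ n⌉}. Then: (i) μ is doubling with respect to 𝔊 with constant at most Δ_μ^{1 + ⌈(3/2)·log₂ n⌉}; (ii) for all x ∈ ℝⁿ and all f, (1/c_n)·M_{𝔊,μ}f(x) ≤ M_{𝔅,μ}f(x) ≤ c_n·M_{𝔊,μ}f(x);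 (iii) for every B ∈ 𝔅, μ(B) ≥ c_n^{−1}·μ(R_B). -/
open MeasureTheory Set Filter
open scoped ENNReal Topology Pointwise

section AuxLemmas
open scoped Pointwise

variable {E : Type*} [NormedAddCommGroup E] [NormedSpace ℝ E]

private lemma homIm_eq (z : E) (t : ℝ) (B : Set E) :
    (fun x => z + t • (x - z)) '' B = (z - t • z) +ᵥ t • B := by
  ext x
  simp only [Set.mem_image, Set.mem_vadd_set, Set.mem_smul_set, vadd_eq_add]
  constructor
  · rintro ⟨b, hb, rfl⟩; exact ⟨t • b, ⟨b, hb, rfl⟩, by module⟩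
  · rintro ⟨_, ⟨b, hb, rfl⟩, rfl⟩; exact ⟨b, hb, by module⟩

private lemma homIm_double (z : E) (t : ℝ) (B : Set E) :
    (fun x => z + (2 * t) • (x - z)) '' B
      = (-z) +ᵥ (2 : ℝ) • ((fun x => z + t • (x - z)) '' B) := by
  ext x
  simp only [Set.mem_image, Set.mem_vadd_set, Set.mem_smul_set, vadd_eq_add]
  constructor
  · rintro ⟨b, hb, rfl⟩
    exact ⟨(2 : ℝ) • (z + t • (b - z)), ⟨z + t • (b - z), ⟨b, hb, rfl⟩, rfl⟩, by module⟩
  · rintro ⟨_, ⟨_, ⟨b, hb, rfl⟩, rfl⟩, rfl⟩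
    exact ⟨b, hb, by module⟩

private lemma homIm_mono {B : Set E} (hconv : Convex ℝ B) {z : E} (hz : z ∈ B)
    {c t : ℝ} (hc : 0 ≤ c) (hct : c ≤ t) (ht : 0 < t) :
    (fun x => z + c • (x - z)) '' B ⊆ (fun x => z + t • (x - z)) '' B := by
  rintro _ ⟨b, hb, rfl⟩
  have htne : t ≠ 0 := ne_of_gt ht
  refine ⟨z + (c / t) • (b - z), ?_, ?_⟩
  · have h1 : z + (c / t) • (b - z) = (1 - c / t) • z + (c / t) • b := by module
    have h2 : c / t ≤ 1 := by
      rw [div_le_one ht]; exact hct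
    have h3 : 0 ≤ c / t := by positivity
    rw [h1]
    exact hconv hz hb (by linarith) h3 (by ring)
  · show z + t • (z + (c / t) • (b - z) - z) = z + c • (b - z)
    have h4 : t • ((c / t) • (b - z)) = c • (b - z) := by
      rw [smul_smul]
      congr 1
      field_simp
    rw [add_sub_cancel_left, h4]

private lemma homIm_one (z : E) (B : Set E) :
    (fun x => z + (1 : ℝ) • (x - z)) '' B = B := by
  ext x
  simp only [Set.mem_image]
  constructor
  · rintro ⟨b, hb, rfl⟩
    have : z + (1 : ℝ) • (b - z) = b := by module
    rwa [this]
  · intro hx; exact ⟨x, hx, by module⟩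

private lemma neg_mem_closure_of_sub {R : Set E} (hne : R.Nonempty) {σ : E}
    (h : R ⊆ σ +ᵥ (2 : ℝ) • R) : -σ ∈ closure R := by
  obtain ⟨x₀, hx₀⟩ := hne
  have key : ∀ k : ℕ, -σ + ((2 : ℝ)⁻¹) ^ k • (x₀ + σ) ∈ R := by
    intro k
    induction k with
    | zero =>
      have : -σ + ((2 : ℝ)⁻¹) ^ 0 • (x₀ + σ) = x₀ := by module
      rwa [this]
    | succ k ih =>
      obtain ⟨_, ⟨y, hy, rfl⟩, hxy⟩ := h ih
      have hxy' : σ + (2 : ℝ) • y = -σ + ((2 : ℝ)⁻¹) ^ k • (x₀ + σ) := hxy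
      have hy' : y = -σ + ((2 : ℝ)⁻¹) ^ (k + 1) • (x₀ + σ) := by
        have h5 : y = (2⁻¹ : ℝ) • (σ + (2 : ℝ) • y) - (2⁻¹ : ℝ) • σ := by module
        rw [hxy'] at h5
        rw [h5]
        have hc : ((2 : ℝ)⁻¹) ^ (k + 1) = 2⁻¹ * ((2 : ℝ)⁻¹) ^ k := by ring
        rw [hc]
        module
      rwa [hy'] at hy
  have htend : Filter.Tendsto (fun k : ℕ => -σ + ((2 : ℝ)⁻¹) ^ k • (x₀ + σ))
      Filter.atTop (𝓝 (-σ)) := by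
    have h0 : Filter.Tendsto (fun k : ℕ => ((2 : ℝ)⁻¹) ^ k) Filter.atTop (𝓝 0) :=
      tendsto_pow_atTop_nhds_zero_of_lt_one (by norm_num) (by norm_num)
    have h1 := (h0.smul_const (x₀ + σ)).const_add (-σ)
    simpa using h1
  exact mem_closure_of_tendsto htend (Filter.Eventually.of_forall key)

private lemma avg_le_avg {A A' m m' c : ℝ≥0∞} (hc0 : c ≠ 0) (hct : c ≠ ⊤)
    (hA : A ≤ A') (hm : m' ≤ c * m) : A / m ≤ c * (A' / m') := by
  have h1 : c⁻¹ * m' ≤ m := by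
    calc c⁻¹ * m' ≤ c⁻¹ * (c * m) := mul_le_mul_right hm _
    _ = m := by rw [← mul_assoc, ENNReal.inv_mul_cancel hc0 hct, one_mul]
  have h2 : m⁻¹ ≤ c * m'⁻¹ := by
    have h3 := ENNReal.inv_le_inv.mpr h1
    rwa [ENNReal.mul_inv (Or.inl (ENNReal.inv_ne_zero.mpr hct))
      (Or.inl (ENNReal.inv_ne_top.mpr hc0)), inv_inv] at h3
  calc A / m = A * m⁻¹ := div_eq_mul_inv A m
  _ ≤ A' * (c * m'⁻¹) := mul_le_mul' hA h2
  _ = c * (A' / m') := by rw [div_eq_mul_inv]; ring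

end AuxLemmas

private lemma keyLemma {n : ℕ} {𝔅 : Set (Set (EuclideanSpace ℝ (Fin n)))}
    (hhom : HomothecyInvariant 𝔅) {μ : Measure (EuclideanSpace ℝ (Fin n))}
    {Δ : ℝ} (hdbl : DoublingWrt μ 𝔅 Δ) {B : Set (EuclideanSpace ℝ (Fin n))}
    (hBmem : B ∈ 𝔅) (hconv : Convex ℝ B) {z : EuclideanSpace ℝ (Fin n)} (hz : z ∈ B)
    (N : ℕ) :
    (fun x => z + ((2 : ℝ) ^ N) • (x - z)) '' B ∈ 𝔅 ∧
      μ ((fun x => z + ((2 : ℝ) ^ N) • (x - z)) '' B) ≤ ENNReal.ofReal Δ ^ N * μ B := by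
  induction N with
  | zero =>
    have him : (fun x => z + ((2 : ℝ) ^ 0) • (x - z)) '' B = B := by
      rw [pow_zero]; exact homIm_one z B
    rw [him]; exact ⟨hBmem, by simp⟩
  | succ N ih =>
    obtain ⟨hmem, hbound⟩ := ih
    set S := (fun x => z + ((2 : ℝ) ^ N) • (x - z)) '' B with hS
    have hpow : (2 : ℝ) ^ (N + 1) = 2 * 2 ^ N := by ring
    have heq : (fun x => z + ((2 : ℝ) ^ (N + 1)) • (x - z)) '' B = (-z) +ᵥ (2 : ℝ) • S := by
      rw [hpow]; exact homIm_double z _ B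
    have hsub : S ⊆ (-z) +ᵥ (2 : ℝ) • S := by
      rw [← heq, hS]
      exact homIm_mono hconv hz (by positivity)
        (by rw [hpow]; nlinarith [pow_pos (by norm_num : (0:ℝ) < 2) N]) (by positivity)
    have hmem2 : (-z) +ᵥ (2 : ℝ) • S ∈ 𝔅 :=
      (hhom _ ((hhom S hmem).2 2 two_pos)).1 (-z)
    refine ⟨by rw [heq]; exact hmem2, ?_⟩
    rw [heq]
    calc μ ((-z) +ᵥ (2 : ℝ) • S) ≤ ENNReal.ofReal Δ * μ S := hdbl S hmem (-z) hsub
    _ ≤ ENNReal.ofReal Δ * (ENNReal.ofReal Δ ^ N * μ B) := mul_le_mul_right hbound _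
    _ = ENNReal.ofReal Δ ^ (N + 1) * μ B := by ring


/-- Lemma `l.convrect` of the paper. Let `𝔅` be a homothecy invariant
basis of nonempty bounded open convex sets, with an associated rectangle `Rect B ⊇ B`
for each `B ∈ 𝔅`, contained in the image of `B` under a homothety of ratio `n^{3/2}`
centered at a point of `B`, such that `𝔊 = Rect '' 𝔅` is homothecy invariant. If `μ` is
doubling w.r.t. `𝔅` with constant `Δ` and `c_n = Δ^{⌈(3/2)·log₂ n⌉}`, then: (i) `μ` is
doubling w.r.t. `𝔊` with constant `Δ^{1+⌈(3/2)·log₂ n⌉}`; (ii) `M_{𝔊,μ}` and `M_{𝔅,μ}`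
are pointwise equivalent with constant `c_n`; and (iii) `μ(B) ≥ c_n⁻¹·μ(Rect B)` for
every `B ∈ 𝔅`. -/
theorem statement16 (n : ℕ) (𝔅 : Set (Set (EuclideanSpace ℝ (Fin n))))
    (hB : ∀ B ∈ 𝔅, IsConvexBasisSet B) (hhom : HomothecyInvariant 𝔅)
    (Rect : Set (EuclideanSpace ℝ (Fin n)) → Set (EuclideanSpace ℝ (Fin n)))
    (hRect : ∀ B ∈ 𝔅, IsRect (Rect B) ∧ B ⊆ Rect B ∧
      ∃ z ∈ B, Rect B ⊆ (fun x => z + ((n : ℝ) ^ (3 / 2 : ℝ)) • (x - z)) '' B)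
    (hGhom : HomothecyInvariant (Rect '' 𝔅))
    (μ : Measure (EuclideanSpace ℝ (Fin n)))
    (hloc : IsLocallyFiniteMeasure μ) (hμ : μ ≠ 0)
    (Δ : ℝ) (hΔ : 1 < Δ) (hdbl : DoublingWrt μ 𝔅 Δ) :
    DoublingWrt μ (Rect '' 𝔅) (Δ ^ (1 + ⌈(3 / 2 : ℝ) * Real.logb 2 n⌉)) ∧
    (∀ (f : EuclideanSpace ℝ (Fin n) → ℝ) (x : EuclideanSpace ℝ (Fin n)),
      ENNReal.ofReal ((Δ ^ ⌈(3 / 2 : ℝ) * Real.logb 2 n⌉)⁻¹) *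
          maxOp μ (Rect '' 𝔅) f x ≤ maxOp μ 𝔅 f x ∧
      maxOp μ 𝔅 f x ≤
        ENNReal.ofReal (Δ ^ ⌈(3 / 2 : ℝ) * Real.logb 2 n⌉) * maxOp μ (Rect '' 𝔅) f x) ∧
    (∀ B ∈ 𝔅,
      ENNReal.ofReal ((Δ ^ ⌈(3 / 2 : ℝ) * Real.logb 2 n⌉)⁻¹) * μ (Rect B) ≤ μ B) := by
  have hΔ0 : (0 : ℝ) < Δ := lt_trans one_pos hΔ
  set s : ℤ := ⌈(3 / 2 : ℝ) * Real.logb 2 n⌉ with hs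
  have hs0 : (0 : ℤ) ≤ s := by
    rw [hs]
    apply Int.ceil_nonneg
    rcases Nat.eq_zero_or_pos n with h | h
    · simp [h]
    · have hn1 : (1 : ℝ) ≤ n := by exact_mod_cast h
      have := Real.logb_nonneg (by norm_num : (1:ℝ) < 2) hn1
      positivity
  set N : ℕ := s.toNat with hN
  have hsN : s = (N : ℤ) := (Int.toNat_of_nonneg hs0).symm
  have hC : Δ ^ s = Δ ^ N := by rw [hsN, zpow_natCast]
  have hCpos : (0 : ℝ) < Δ ^ s := by rw [hC]; positivity
  have hc0 : ENNReal.ofReal (Δ ^ s) ≠ 0 := ne_of_gt (ENNReal.ofReal_pos.mpr hCpos)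
  have hct : ENNReal.ofReal (Δ ^ s) ≠ ⊤ := ENNReal.ofReal_ne_top
  have hCof : ENNReal.ofReal (Δ ^ s) = ENNReal.ofReal Δ ^ N := by
    rw [hC, ENNReal.ofReal_pow hΔ0.le]
  have hinv : ENNReal.ofReal ((Δ ^ s)⁻¹) = (ENNReal.ofReal (Δ ^ s))⁻¹ :=
    ENNReal.ofReal_inv_of_pos hCpos
  have hpow2 : ((n : ℝ)) ^ (3 / 2 : ℝ) ≤ (2 : ℝ) ^ N := by
    rcases Nat.eq_zero_or_pos n with h | h
    · subst h
      rw [Nat.cast_zero, Real.zero_rpow (by norm_num : (3 / 2 : ℝ) ≠ 0)]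
      positivity
    · have hn : (0 : ℝ) < n := by exact_mod_cast h
      have h1 : (n : ℝ) ^ (3 / 2 : ℝ) = (2 : ℝ) ^ ((3 / 2 : ℝ) * Real.logb 2 n) := by
        rw [mul_comm, Real.rpow_mul (by norm_num : (0 : ℝ) ≤ 2),
          Real.rpow_logb (by norm_num) (by norm_num) hn]
      rw [h1]
      have h2 : (3 / 2 : ℝ) * Real.logb 2 n ≤ (N : ℝ) := by
        have h3 := Int.le_ceil ((3 / 2 : ℝ) * Real.logb 2 n)
        rw [← hs] at h3
        refine h3.trans ?_
        rw [hsN]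
        exact le_of_eq (by push_cast; ring)
      calc (2 : ℝ) ^ ((3 / 2 : ℝ) * Real.logb 2 n) ≤ (2 : ℝ) ^ ((N : ℕ) : ℝ) :=
            Real.rpow_le_rpow_of_exponent_le one_le_two h2
      _ = (2 : ℝ) ^ N := Real.rpow_natCast 2 N
  -- the per-B package
  have hpack : ∀ B ∈ 𝔅, ∃ S ∈ 𝔅, IsOpen S ∧ Convex ℝ S ∧ B ⊆ S ∧ Rect B ⊆ S ∧
      μ S ≤ ENNReal.ofReal (Δ ^ s) * μ B := by
    intro B hBm
    obtain ⟨hne, hbd, hop, hconv⟩ := hB B hBm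
    obtain ⟨hrect, hBR, z, hz, hRz⟩ := hRect B hBm
    obtain ⟨hSmem, hSbound⟩ := keyLemma hhom hdbl hBm hconv hz N
    have htpos : (0 : ℝ) < 2 ^ N := by positivity
    have h1le : (1 : ℝ) ≤ 2 ^ N := one_le_pow₀ one_le_two
    refine ⟨_, hSmem, ?_, ?_, ?_, ?_, by rw [hCof]; exact hSbound⟩
    · rw [homIm_eq]
      exact (hop.smul₀ (ne_of_gt htpos)).vadd _
    · rw [homIm_eq]
      exact (hconv.smul _).vadd _
    · intro x hx
      have hx1 : x ∈ (fun x => z + (1 : ℝ) • (x - z)) '' B := by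
        rw [homIm_one]; exact hx
      exact homIm_mono hconv hz zero_le_one h1le htpos hx1
    · exact hRz.trans (homIm_mono hconv hz
        (Real.rpow_nonneg (Nat.cast_nonneg n) _) hpow2 htpos)
  have part3 : ∀ B ∈ 𝔅, μ (Rect B) ≤ ENNReal.ofReal (Δ ^ s) * μ B := by
    intro B hBm
    obtain ⟨S, _, _, _, _, hRS, hb⟩ := hpack B hBm
    exact (measure_mono hRS).trans hb
  have part3' : ∀ B ∈ 𝔅, ENNReal.ofReal ((Δ ^ s)⁻¹) * μ (Rect B) ≤ μ B := by
    intro B hBm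
    rw [hinv]
    calc (ENNReal.ofReal (Δ ^ s))⁻¹ * μ (Rect B)
        ≤ (ENNReal.ofReal (Δ ^ s))⁻¹ * (ENNReal.ofReal (Δ ^ s) * μ B) :=
          mul_le_mul_right (part3 B hBm) _
    _ = μ B := by rw [← mul_assoc, ENNReal.inv_mul_cancel hc0 hct, one_mul]
  have part2b : ∀ (f : EuclideanSpace ℝ (Fin n) → ℝ) (x : EuclideanSpace ℝ (Fin n)),
      maxOp μ 𝔅 f x ≤ ENNReal.ofReal (Δ ^ s) * maxOp μ (Rect '' 𝔅) f x := by
    intro f x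
    simp only [maxOp]
    refine iSup_le fun B => iSup_le fun hBm => iSup_le fun hx => iSup_le fun hμB => ?_
    obtain ⟨hrect, hBR, _⟩ := hRect B hBm
    have hμR : 0 < μ (Rect B) := lt_of_lt_of_le hμB (measure_mono hBR)
    have havg : (∫⁻ y in B, ENNReal.ofReal |f y| ∂μ) / μ B ≤
        ENNReal.ofReal (Δ ^ s) *
          ((∫⁻ y in Rect B, ENNReal.ofReal |f y| ∂μ) / μ (Rect B)) :=
      avg_le_avg hc0 hct (lintegral_mono_set hBR) (part3 B hBm)
    refine havg.trans (mul_le_mul_right ?_ _)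
    exact le_iSup_of_le (Rect B) (le_iSup_of_le (Set.mem_image_of_mem Rect hBm)
      (le_iSup_of_le (hBR hx) (le_iSup_of_le hμR le_rfl)))
  have part2a : ∀ (f : EuclideanSpace ℝ (Fin n) → ℝ) (x : EuclideanSpace ℝ (Fin n)),
      maxOp μ (Rect '' 𝔅) f x ≤ ENNReal.ofReal (Δ ^ s) * maxOp μ 𝔅 f x := by
    intro f x
    simp only [maxOp]
    refine iSup_le fun R => iSup_le fun hRm => iSup_le fun hx => iSup_le fun hμR => ?_
    obtain ⟨B, hBm, rfl⟩ := hRm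
    obtain ⟨S, hSm, _, _, hBS, hRS, hb⟩ := hpack B hBm
    have hb' : μ S ≤ ENNReal.ofReal (Δ ^ s) * μ (Rect B) :=
      hb.trans (mul_le_mul_right (measure_mono (hRect B hBm).2.1) _)
    have hμS : 0 < μ S := hμR.trans_le (measure_mono hRS)
    have havg : (∫⁻ y in Rect B, ENNReal.ofReal |f y| ∂μ) / μ (Rect B) ≤
        ENNReal.ofReal (Δ ^ s) * ((∫⁻ y in S, ENNReal.ofReal |f y| ∂μ) / μ S) :=
      avg_le_avg hc0 hct (lintegral_mono_set hRS) hb'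
    refine havg.trans (mul_le_mul_right ?_ _)
    exact le_iSup_of_le S (le_iSup_of_le hSm (le_iSup_of_le (hRS hx)
      (le_iSup_of_le hμS le_rfl)))
  refine ⟨?_, fun f x => ⟨?_, part2b f x⟩, part3'⟩
  · -- part (i) : doubling for the rectangles
    rintro R ⟨B, hBm, rfl⟩ σ hsub
    obtain ⟨hne, hbd, hop, hconv⟩ := hB B hBm
    obtain ⟨S, hSm, hSop, hSconv, hBS, hRS, hb⟩ := hpack B hBm
    have hRne : (Rect B).Nonempty := hne.mono (hRect B hBm).2.1
    have hp : -σ ∈ closure (Rect B) := neg_mem_closure_of_sub hRne hsub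
    have hpS : -σ ∈ closure S := closure_mono hRS hp
    have hSsub : S ⊆ σ +ᵥ (2 : ℝ) • S := by
      intro x hxS
      have hmid : (2⁻¹ : ℝ) • x + (2⁻¹ : ℝ) • (-σ) ∈ interior S :=
        hSconv.combo_interior_closure_mem_interior
          (by rwa [hSop.interior_eq]) hpS (by norm_num) (by norm_num) (by norm_num)
      rw [hSop.interior_eq] at hmid
      refine ⟨(2 : ℝ) • ((2⁻¹ : ℝ) • x + (2⁻¹ : ℝ) • (-σ)),
        ⟨_, hmid, rfl⟩, ?_⟩
      show σ + (2 : ℝ) • ((2⁻¹ : ℝ) • x + (2⁻¹ : ℝ) • (-σ)) = x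
      module
    have h1 : μ (σ +ᵥ (2 : ℝ) • Rect B) ≤ μ (σ +ᵥ (2 : ℝ) • S) :=
      measure_mono (Set.vadd_set_mono (Set.smul_set_mono hRS))
    have h2 := hdbl S hSm σ hSsub
    have hfin : ENNReal.ofReal (Δ ^ (1 + s)) =
        ENNReal.ofReal Δ * ENNReal.ofReal (Δ ^ s) := by
      rw [zpow_add₀ (ne_of_gt hΔ0), zpow_one, ENNReal.ofReal_mul hΔ0.le]
    calc μ (σ +ᵥ (2 : ℝ) • Rect B) ≤ ENNReal.ofReal Δ * μ S := h1.trans h2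
    _ ≤ ENNReal.ofReal Δ * (ENNReal.ofReal (Δ ^ s) * μ B) := mul_le_mul_right hb _
    _ ≤ ENNReal.ofReal Δ * (ENNReal.ofReal (Δ ^ s) * μ (Rect B)) :=
        mul_le_mul_right (mul_le_mul_right (measure_mono (hRect B hBm).2.1) _) _
    _ = ENNReal.ofReal (Δ ^ (1 + s)) * μ (Rect B) := by rw [hfin, mul_assoc]
  · -- part (ii), first inequality
    rw [hinv]
    calc (ENNReal.ofReal (Δ ^ s))⁻¹ * maxOp μ (Rect '' 𝔅) f x
        ≤ (ENNReal.ofReal (Δ ^ s))⁻¹ * (ENNReal.ofReal (Δ ^ s) * maxOp μ 𝔅 f x) :=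
          mul_le_mul_right (part2a f x) _
    _ = maxOp μ 𝔅 f x := by rw [← mul_assoc, ENNReal.inv_mul_cancel hc0 hct, one_mul]
end
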